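/- arXiv:math/0606037 — 8 statements merged into one kernel-verified Lean document; each statement's English description precedes it below -/
import Mathlib

section
/- Let μ be a nontrivial probability measure on the unit circle and let w0, w1 be distinct points of the unit circle such that the open arc (w0, w1) is disjoint from the support of μ. Then for every β on the unit circle and every n ≥ 1, the paraorthogonal polynomial Φ_n(z, dμ; β) = zΦ_{n−1}(z, dμ) − conj(β)·Φ_{n−1}^*(z, dμ) has at most one zero in the open arc (w0, w1). -/
open MeasureTheory Polynomial

/-- The open arc on the unit circle from `z` to `w`, counterclockwise. -/
def oArc (z w : ℂ) : Set ℂ :=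
  {ζ | ∃ s t : ℝ, 0 < t ∧ t < s ∧ s < 2 * Real.pi ∧
    w = z * Complex.exp (s * Complex.I) ∧ ζ = z * Complex.exp (t * Complex.I)}

/-- The (closed) support of a measure on `ℂ`: points all of whose open
neighborhoods have positive measure. -/
def measSupport (μ : Measure ℂ) : Set ℂ :=
  {x | ∀ s : Set ℂ, IsOpen s → x ∈ s → 0 < μ s}

/-!
If `z₁ ≠ z₂` were two zeros of `Φ_n(·; β)` in the gap, write `Φ_n(z; β) = (z - z₁)(z - z₂) p(z)`
with `deg p = n - 2`. Since `Φ_n(·; β)` is orthogonal to `z, …, z^{n-1}` in `L²(μ)`,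
`0 = ∫ conj(z p(z)) Φ_n(z; β) dμ = ∫ |p|² conj(z) (z - z₁)(z - z₂) dμ`.
For `z = w₀ e^{iθ}` and `zⱼ = w₀ e^{itⱼ}`, a fixed rotation turns `conj(z) (z - z₁)(z - z₂)` into
the real number `2 cos(θ - (t₁ + t₂)/2) - 2 cos((t₁ - t₂)/2)`, which is negative off the arc, hence
on the support of `μ`. So `p` vanishes on the infinite support, which is absurd.
-/

open Complex ComplexConjugate Metric Set

section MeasureSupport

theorem measSupport_eq_support (μ : Measure ℂ) : measSupport μ = μ.support := by
  ext x
  rw [Measure.mem_support_iff_forall]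
  refine ⟨fun h U hU => ?_, fun h s hs hxs => h s (hs.mem_nhds hxs)⟩
  obtain ⟨s, hsU, hs, hxs⟩ := _root_.mem_nhds_iff.mp hU
  exact (h s hs hxs).trans_le (measure_mono hsU)

theorem ae_mem_measSupport (μ : Measure ℂ) : ∀ᵐ z ∂μ, z ∈ measSupport μ := by
  rw [measSupport_eq_support]
  exact Measure.support_mem_ae

variable {μ : Measure ℂ}

theorem eq_zero_of_integral_eq_zero_of_nonpos_on_measSupport {g : ℂ → ℝ} (hg : Continuous g)
    (hgi : Integrable g μ) (hle : ∀ z ∈ measSupport μ, g z ≤ 0) (h0 : ∫ z, g z ∂μ = 0)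
    {z : ℂ} (hz : z ∈ measSupport μ) : g z = 0 := by
  have hae : g =ᵐ[μ] 0 := by
    have hneg : -g =ᵐ[μ] 0 := by
      refine (integral_eq_zero_iff_of_nonneg_ae ?_ hgi.neg).mp ?_
      · filter_upwards [ae_mem_measSupport μ] with y hy using neg_nonneg.mpr (hle y hy)
      · simp only [Pi.neg_apply, integral_neg, h0, neg_zero]
    exact hneg.mono fun _ hy => neg_eq_zero.mp hy
  refine (hle z hz).antisymm (not_lt.mp fun hlt => ?_)
  have hpos := hz _ (isOpen_Iio.preimage hg) hlt
  exact hpos.ne' (measure_mono_null (fun y hy => ne_of_lt hy) (ae_iff.mp hae))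

theorem measSupport_subset_sphere (hcirc : μ (sphere 0 1)ᶜ = 0) : measSupport μ ⊆ sphere 0 1 :=
  fun _ hz => by_contra fun h => (hz _ isClosed_sphere.isOpen_compl h).ne' hcirc

theorem integrable_of_continuous_of_measure_compl_sphere [IsFiniteMeasure μ]
    (hcirc : μ (sphere 0 1)ᶜ = 0) {E : Type*} [NormedAddCommGroup E] {f : ℂ → E}
    (hf : Continuous f) : Integrable f μ := by
  have hae : ∀ᵐ z ∂μ, z ∈ sphere (0 : ℂ) 1 := measure_eq_zero_iff_ae_notMem.mp hcirc |>.mono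
    fun _ h => not_not.mp h
  have hon : IntegrableOn f (sphere 0 1) μ :=
    hf.continuousOn.integrableOn_compact (isCompact_sphere 0 1)
  rwa [IntegrableOn, Measure.restrict_eq_self_of_ae_mem hae] at hon

end MeasureSupport

section Paraorthogonal

theorem Complex.conj_mul_self_of_norm_eq_one {z : ℂ} (hz : ‖z‖ = 1) : conj z * z = 1 := by
  rw [conj_mul', hz]
  norm_num

theorem Polynomial.Monic.X_mul_sub_of_natDegree_le {R : Type*} [Ring R] [Nontrivial R]
    {P S : R[X]} (hP : P.Monic) (hS : S.natDegree ≤ P.natDegree) :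
    (X * P - S).Monic ∧ (X * P - S).natDegree = P.natDegree + 1 := by
  have hXP : (X * P).natDegree = P.natDegree + 1 := by
    rw [monic_X.natDegree_mul hP, natDegree_X, add_comm]
  have hlt : S.natDegree < (X * P).natDegree := by omega
  refine ⟨(monic_X.mul hP).sub_of_left ?_, by rw [natDegree_sub_eq_left_of_natDegree_lt hlt, hXP]⟩
  exact degree_lt_degree hlt

theorem Polynomial.exists_eq_X_sub_C_mul_X_sub_C_mul {K : Type*} [Field K] {Q : K[X]} {a b : K}
    (hQ : Q ≠ 0) (ha : Q.IsRoot a) (hb : Q.IsRoot b) (hab : a ≠ b) :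
    ∃ p, Q = (X - C a) * (X - C b) * p ∧ p.natDegree + 2 = Q.natDegree := by
  obtain ⟨p, rfl⟩ := (isCoprime_X_sub_C_of_isUnit_sub (sub_ne_zero.mpr hab).isUnit).mul_dvd
    (dvd_iff_isRoot.mpr ha) (dvd_iff_isRoot.mpr hb)
  refine ⟨p, rfl, ?_⟩
  have hp : p ≠ 0 := right_ne_zero_of_mul hQ
  rw [((monic_X_sub_C a).mul (monic_X_sub_C b)).natDegree_mul' hp,
    (monic_X_sub_C a).natDegree_mul (monic_X_sub_C b), natDegree_X_sub_C, natDegree_X_sub_C]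
  ring

theorem eval_reflect_map_conj {P : ℂ[X]} {m : ℕ} (hP : P.natDegree ≤ m) {z : ℂ}
    (hz : ‖z‖ = 1) : (reflect m (P.map (starRingEnd ℂ))).eval z = z ^ m * conj (P.eval z) := by
  have hzz := conj_mul_self_of_norm_eq_one hz
  let : Invertible (conj z) := ⟨z, mul_comm z (conj z) ▸ hzz, hzz⟩
  have h := eval₂_reflect_mul_pow (RingHom.id ℂ) (conj z) m (P.map (starRingEnd ℂ))
    (natDegree_map_le.trans hP)
  rw [eval₂_map, RingHom.id_comp, eval₂_at_apply] at h
  change (reflect m (P.map (starRingEnd ℂ))).eval z * conj z ^ m = _ at h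
  rw [← h, mul_comm, mul_assoc, ← mul_pow, hzz, one_pow, mul_one]

/-- The paraorthogonal polynomial `Φ_{m+1}(z; β) = z Φ_m(z) - β̄ Φ_m^*(z)`, for `P = Φ_m`. -/
noncomputable def paraorthogonal (P : ℂ[X]) (m : ℕ) (β : ℂ) : ℂ[X] :=
  X * P - C (conj β) * reflect m (P.map (starRingEnd ℂ))

theorem Polynomial.Monic.paraorthogonal {P : ℂ[X]} {m : ℕ} (hP : P.Monic) (hdeg : P.natDegree = m)
    (β : ℂ) : (paraorthogonal P m β).Monic ∧ (paraorthogonal P m β).natDegree = m + 1 := by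
  rw [← hdeg]
  refine hP.X_mul_sub_of_natDegree_le ((natDegree_C_mul_le _ _).trans ?_)
  exact natDegree_reflect_le.trans (max_le le_rfl (natDegree_map_le.trans le_rfl))

variable {μ : Measure ℂ} [IsFiniteMeasure μ]

theorem integral_conj_pow_mul_eval_paraorthogonal (hcirc : μ (sphere 0 1)ᶜ = 0) {P : ℂ[X]}
    {m : ℕ} (hP : P.natDegree ≤ m) (horth : ∀ k < m, ∫ z, conj (z ^ k) * P.eval z ∂μ = 0)
    (β : ℂ) {k : ℕ} (hk : 1 ≤ k) (hkm : k ≤ m) :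
    ∫ z, conj (z ^ k) * (paraorthogonal P m β).eval z ∂μ = 0 := by
  obtain ⟨j, rfl⟩ := Nat.exists_eq_add_of_le' hk
  obtain ⟨l, rfl⟩ := Nat.exists_eq_add_of_le hkm
  have hpt : ∀ᵐ z ∂μ, conj (z ^ (j + 1)) * (paraorthogonal P (j + 1 + l) β).eval z
      = conj (z ^ j) * P.eval z - conj β * conj (conj (z ^ l) * P.eval z) := by
    filter_upwards [measure_eq_zero_iff_ae_notMem.mp hcirc] with z hz
    have hz1 : ‖z‖ = 1 := mem_sphere_zero_iff_norm.mp (not_not.mp hz)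
    have hzz := conj_mul_self_of_norm_eq_one hz1
    have hzz' : (conj z * z) ^ (j + 1) = 1 := by rw [hzz, one_pow]
    simp only [paraorthogonal, eval_sub, eval_mul, eval_X, eval_C, eval_reflect_map_conj hP hz1,
      map_mul, map_pow, conj_conj]
    linear_combination conj z ^ j * P.eval z * hzz - conj β * conj (P.eval z) * z ^ l * hzz'
  have hint {f : ℂ → ℂ} (hf : Continuous f) : Integrable f μ :=
    integrable_of_continuous_of_measure_compl_sphere hcirc hf
  rw [integral_congr_ae hpt, integral_sub (hint (by fun_prop)) (hint (by fun_prop)),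
    integral_const_mul, integral_conj, horth j (by omega), horth l (by omega), map_zero, mul_zero,
    sub_zero]

end Paraorthogonal

section UnitCircleMeasure

variable {μ : Measure ℂ} [IsFiniteMeasure μ]

theorem integral_conj_mul_eval_mul_eq_zero (hcirc : μ (sphere 0 1)ᶜ = 0) {f : ℂ → ℂ}
    (hf : Continuous f) {m : ℕ} (hf0 : ∀ k, 1 ≤ k → k ≤ m → ∫ z, conj (z ^ k) * f z ∂μ = 0)
    {p : ℂ[X]} (hp : p.natDegree < m) : ∫ z, conj (z * p.eval z) * f z ∂μ = 0 := by
  have hexpand (z : ℂ) : conj (z * p.eval z) * f z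
      = ∑ k ∈ Finset.range m, conj (p.coeff k) * (conj (z ^ (k + 1)) * f z) := by
    rw [eval_eq_sum_range' hp, Finset.mul_sum, map_sum, Finset.sum_mul]
    exact Finset.sum_congr rfl fun k _ => by simp only [map_mul, map_pow]; ring
  simp_rw [hexpand]
  rw [integral_finsetSum _ fun k _ =>
    (integrable_of_continuous_of_measure_compl_sphere hcirc (by fun_prop)).const_mul _]
  refine Finset.sum_eq_zero fun k hk => ?_
  rw [integral_const_mul, hf0 (k + 1) le_add_self (Finset.mem_range.mp hk), mul_zero]

theorem eval_eq_zero_on_measSupport_of_integral_normSq_mul_eq_zero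
    (hcirc : μ (sphere 0 1)ᶜ = 0) {p : ℂ[X]} {K : ℂ → ℂ} (hK : Continuous K) {γ : ℂ}
    (hγ : ∀ z ∈ measSupport μ, (γ * K z).re < 0) (h : ∫ z, normSq (p.eval z) * K z ∂μ = 0)
    {z : ℂ} (hz : z ∈ measSupport μ) : p.eval z = 0 := by
  set g : ℂ → ℝ := fun z => normSq (p.eval z) * (γ * K z).re
  have hg : Continuous g := by fun_prop
  have hgγ (z : ℂ) : g z = (γ * (normSq (p.eval z) * K z)).re := by
    rw [mul_left_comm, re_ofReal_mul]
  have hint : ∫ z, g z ∂μ = 0 := by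
    have hre := integral_re (𝕜 := ℂ) (integrable_of_continuous_of_measure_compl_sphere hcirc
      (f := fun z => γ * (normSq (p.eval z) * K z)) (by fun_prop))
    simp only [RCLike.re_to_complex, integral_const_mul, h, mul_zero, zero_re] at hre
    simpa only [hgγ] using hre
  have hg0 := eq_zero_of_integral_eq_zero_of_nonpos_on_measSupport hg
    (integrable_of_continuous_of_measure_compl_sphere hcirc hg)
    (fun y hy => mul_nonpos_of_nonneg_of_nonpos (normSq_nonneg _) (hγ y hy).le) hint hz
  exact normSq_eq_zero.mp ((mul_eq_zero.mp hg0).resolve_right (hγ z hz).ne)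

end UnitCircleMeasure

theorem exists_mem_Ico_eq_exp_mul_I {v : ℂ} (hv : ‖v‖ = 1) :
    ∃ θ ∈ Ico 0 (2 * Real.pi), v = exp (θ * I) := by
  have hv' : v = exp (arg v * I) := by
    simpa [hv] using (norm_mul_exp_arg_mul_I v).symm
  rcases le_or_gt 0 (arg v) with h0 | h0
  · exact ⟨arg v, ⟨h0, (arg_le_pi v).trans_lt (by linarith [Real.pi_pos])⟩, hv'⟩
  · refine ⟨arg v + 2 * Real.pi, ⟨by linarith [neg_pi_lt_arg v], by linarith⟩, ?_⟩
    rw [ofReal_add, add_mul, exp_add, ofReal_mul, ofReal_ofNat, exp_two_pi_mul_I, mul_one]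
    exact hv'

theorem Real.cos_lt_cos_of_lt_of_lt_two_pi_sub {δ x : ℝ} (hδ : 0 < δ) (hδx : δ < x)
    (hx : x < 2 * Real.pi - δ) : Real.cos x < Real.cos δ := by
  rcases le_total x Real.pi with hxπ | hxπ
  · exact Real.cos_lt_cos_of_nonneg_of_le_pi hδ.le hxπ hδx
  · rw [← Real.cos_two_pi_sub x]
    exact Real.cos_lt_cos_of_nonneg_of_le_pi hδ.le (by linarith) (by linarith)

theorem Real.cos_sub_midpoint_lt {s t₁ t₂ θ : ℝ} (h₁ : t₁ ∈ Ioo 0 s) (h₂ : t₂ ∈ Ioo 0 s)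
    (hs : s < 2 * Real.pi) (h₁₂ : t₁ ≠ t₂) (hθ : θ ∈ Ico 0 (2 * Real.pi)) (hθs : θ ∉ Ioo 0 s) :
    Real.cos (θ - (t₁ + t₂) / 2) < Real.cos ((t₁ - t₂) / 2) := by
  wlog hlt : t₁ < t₂ generalizing t₁ t₂
  · have h := this h₂ h₁ h₁₂.symm (h₁₂.symm.lt_of_le (not_lt.mp hlt))
    rwa [add_comm, ← Real.cos_neg ((t₂ - t₁) / 2), ← neg_div, neg_sub] at h
  rw [← Real.cos_neg ((t₁ - t₂) / 2), ← neg_div, neg_sub]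
  have hδ : 0 < (t₂ - t₁) / 2 := by linarith
  rcases eq_or_lt_of_le hθ.1 with rfl | hθ0
  · rw [zero_sub, Real.cos_neg]
    exact Real.cos_lt_cos_of_lt_of_lt_two_pi_sub hδ (by linarith [h₁.1]) (by linarith [h₂.2])
  · have hsθ : s ≤ θ := not_lt.mp fun h => hθs ⟨hθ0, h⟩
    exact Real.cos_lt_cos_of_lt_of_lt_two_pi_sub hδ (by linarith [h₂.2])
      (by linarith [h₁.1, hθ.2])

theorem exp_mul_I_sub_mul_exp_mul_I_sub (σ φ δ : ℂ) :
    (exp ((σ + φ) * I) - exp ((σ + δ) * I)) * (exp ((σ + φ) * I) - exp ((σ - δ) * I))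
      = exp ((2 * σ + φ) * I) * (2 * cos φ - 2 * cos δ) := by
  rw [two_cos, two_cos]
  simp only [add_mul, sub_mul, exp_add, exp_sub, neg_mul, exp_neg, two_mul]
  field_simp
  ring

theorem conj_mul_exp_mul_conj_mul_sub_mul_sub_eq_ofReal {w : ℂ} (hw : ‖w‖ = 1) (θ t₁ t₂ : ℝ) :
    conj w * exp (-((t₁ + t₂) / 2 : ℝ) * I) * (conj (w * exp (θ * I)) *
      ((w * exp (θ * I) - w * exp (t₁ * I)) * (w * exp (θ * I) - w * exp (t₂ * I))))
      = ((2 * Real.cos (θ - (t₁ + t₂) / 2) - 2 * Real.cos ((t₁ - t₂) / 2) : ℝ) : ℂ) := by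
  set σ : ℝ := (t₁ + t₂) / 2
  have hww := conj_mul_self_of_norm_eq_one hw
  have hconj : conj (w * exp (θ * I)) = conj w * exp (-θ * I) := by
    rw [map_mul, ← exp_conj, map_mul, conj_ofReal, conj_I, mul_neg, neg_mul]
  have hprod := exp_mul_I_sub_mul_exp_mul_I_sub σ (θ - σ) ((t₁ - t₂) / 2)
  rw [show (σ : ℂ) + (θ - σ) = θ by ring, show (σ : ℂ) + (t₁ - t₂) / 2 = t₁ by simp [σ]; ring,
    show (σ : ℂ) - (t₁ - t₂) / 2 = t₂ by simp [σ]; ring] at hprod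
  have hexp : exp (-σ * I) * exp (-θ * I) * exp ((2 * σ + (θ - σ)) * I) = 1 := by
    rw [← exp_add, ← exp_add, ← exp_zero]
    ring_nf
  rw [hconj]
  push_cast
  linear_combination (conj w * w) ^ 2 * exp (-σ * I) * exp (-θ * I) * hprod
    + (conj w * w) ^ 2 * (2 * cos (θ - σ) - 2 * cos ((t₁ - t₂) / 2)) * hexp
    + (conj w * w + 1) * (2 * cos (θ - σ) - 2 * cos ((t₁ - t₂) / 2)) * hww

theorem exists_re_mul_neg_of_notMem_oArc {w₀ w₁ z₁ z₂ : ℂ} (hw₀ : ‖w₀‖ = 1)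
    (hz₁ : z₁ ∈ oArc w₀ w₁) (hz₂ : z₂ ∈ oArc w₀ w₁) (hz₁₂ : z₁ ≠ z₂) :
    ∃ γ : ℂ, ∀ z ∈ sphere (0 : ℂ) 1 \ oArc w₀ w₁,
      (γ * (conj z * ((z - z₁) * (z - z₂)))).re < 0 := by
  obtain ⟨s, t₁, ht₁, ht₁s, hs, hw₁, rfl⟩ := hz₁
  obtain ⟨s', t₂, ht₂, ht₂s, hs', hw₁', rfl⟩ := hz₂
  have hw₀0 : w₀ ≠ 0 := norm_ne_zero_iff.mp (hw₀.symm ▸ one_ne_zero)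
  have hss' : s = s' := Circle.exp_injOn_Ico (a := 0) (by simp) ⟨ht₁.le.trans ht₁s.le, hs⟩
    ⟨ht₂.le.trans ht₂s.le, hs'⟩ (Subtype.ext (mul_left_cancel₀ hw₀0 (hw₁.symm.trans hw₁')))
  subst hss'
  have ht₁₂ : t₁ ≠ t₂ := fun h => hz₁₂ (by rw [h])
  refine ⟨conj w₀ * exp (-((t₁ + t₂) / 2 : ℝ) * I), fun z ⟨hz, hzarc⟩ => ?_⟩
  obtain ⟨θ, hθ, hθz⟩ := exists_mem_Ico_eq_exp_mul_I (v := conj w₀ * z)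
    (by rw [norm_mul, norm_conj, hw₀, mem_sphere_zero_iff_norm.mp hz, one_mul])
  have hzθ : z = w₀ * exp (θ * I) := by
    rw [← hθz, ← mul_assoc, mul_comm w₀, conj_mul_self_of_norm_eq_one hw₀, one_mul]
  have hθs : θ ∉ Ioo 0 s := fun h => hzarc ⟨s, θ, h.1, h.2, hs, hw₁, hzθ⟩
  rw [hzθ, conj_mul_exp_mul_conj_mul_sub_mul_sub_eq_ofReal hw₀, ofReal_re]
  linarith [Real.cos_sub_midpoint_lt ⟨ht₁, ht₁s⟩ ⟨ht₂, ht₂s⟩ hs ht₁₂ hθ hθs]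

theorem popuc_at_most_one_zero_in_gap_general
    (μ : Measure ℂ) [IsProbabilityMeasure μ]
    (hcirc : μ (Metric.sphere (0 : ℂ) 1)ᶜ = 0)
    (hnontriv : (measSupport μ).Infinite)
    (Φ : ℕ → Polynomial ℂ)
    (hmonic : ∀ n, (Φ n).Monic)
    (hdeg : ∀ n, (Φ n).natDegree = n)
    (horth : ∀ n, ∀ k < n, ∫ z, (starRingEnd ℂ) (z ^ k) * (Φ n).eval z ∂μ = 0)
    (w0 w1 : ℂ) (hw0 : ‖w0‖ = 1)
    (hdisj : oArc w0 w1 ∩ measSupport μ = ∅)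
    (n : ℕ) (β : ℂ) :
    {z ∈ oArc w0 w1 |
      (X * Φ (n - 1) - Polynomial.C ((starRingEnd ℂ) β) *
        Polynomial.reflect (n - 1) ((Φ (n - 1)).map (starRingEnd ℂ))).eval z = 0}.Subsingleton := by
  rintro z₁ ⟨hz₁, hQz₁⟩ z₂ ⟨hz₂, hQz₂⟩
  by_contra hz₁₂
  obtain ⟨hQ, hQdeg⟩ := (hmonic (n - 1)).paraorthogonal (hdeg (n - 1)) β
  obtain ⟨p, hQp, hpdeg⟩ := exists_eq_X_sub_C_mul_X_sub_C_mul hQ.ne_zero hQz₁ hQz₂ hz₁₂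
  set Q := paraorthogonal (Φ (n - 1)) (n - 1) β
  obtain ⟨γ, hγ⟩ := exists_re_mul_neg_of_notMem_oArc hw0 hz₁ hz₂ hz₁₂
  have hsupp : measSupport μ ⊆ sphere 0 1 \ oArc w0 w1 := fun z hz =>
    ⟨measSupport_subset_sphere hcirc hz, fun hz' => hdisj.subset ⟨hz', hz⟩⟩
  have hzero : ∫ z, conj (z * p.eval z) * Q.eval z ∂μ = 0 :=
    integral_conj_mul_eval_mul_eq_zero hcirc Q.continuous
      (fun k hk hkn =>
        integral_conj_pow_mul_eval_paraorthogonal hcirc (hdeg _).le (horth _) β hk hkn)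
      (by omega)
  have hfactor (z : ℂ) : conj (z * p.eval z) * Q.eval z
      = normSq (p.eval z) * (conj z * ((z - z₁) * (z - z₂))) := by
    rw [hQp, eval_mul, eval_mul, eval_sub, eval_sub, eval_X, eval_C, eval_C, map_mul,
      ← mul_conj]
    ring
  simp_rw [hfactor] at hzero
  have hp : p = 0 := eq_zero_of_infinite_isRoot p <| hnontriv.mono fun z hz =>
    eval_eq_zero_on_measSupport_of_integral_normSq_mul_eq_zero hcirc (by fun_prop)
      (fun y hy => hγ y (hsupp hy)) hzero hz
  exact hQ.ne_zero (by rw [hQp, hp, mul_zero])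

/-- **Theorem 1.1** (Cantero–Moral–Velázquez, Golinskii). If `μ` is a nontrivial
probability measure on the unit circle and the open arc `(w0, w1)` is disjoint from
`supp(dμ)`, then for any `β ∈ ∂𝔻` and any `n ≥ 1`, the paraorthogonal polynomial
`Φ_n(z, dμ; β) = z Φ_{n-1}(z) - conj(β) Φ_{n-1}^*(z)` has at most one zero in
`(w0, w1)`. -/
theorem popuc_at_most_one_zero_in_gap
    (μ : Measure ℂ) [IsProbabilityMeasure μ]
    (hcirc : μ (Metric.sphere (0 : ℂ) 1)ᶜ = 0)
    (hnontriv : (measSupport μ).Infinite)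
    (Φ : ℕ → Polynomial ℂ)
    (hmonic : ∀ n, (Φ n).Monic)
    (hdeg : ∀ n, (Φ n).natDegree = n)
    (horth : ∀ n, ∀ k < n, ∫ z, (starRingEnd ℂ) (z ^ k) * (Φ n).eval z ∂μ = 0)
    (w0 w1 : ℂ) (hw0 : ‖w0‖ = 1) (hw1 : ‖w1‖ = 1) (hne : w0 ≠ w1)
    (hdisj : oArc w0 w1 ∩ measSupport μ = ∅)
    (n : ℕ) (hn : 1 ≤ n) (β : ℂ) (hβ : ‖β‖ = 1) :
    {z ∈ oArc w0 w1 |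
      (X * Φ (n - 1) - Polynomial.C ((starRingEnd ℂ) β) *
        Polynomial.reflect (n - 1) ((Φ (n - 1)).map (starRingEnd ℂ))).eval z = 0}.Subsingleton :=
  popuc_at_most_one_zero_in_gap_general μ hcirc hnontriv Φ hmonic hdeg horth w0 w1 hw0 hdisj n β
end

section
/- Let U and V be unitary operators on a complex Hilbert space H such that U − V has rank one. Then there exist a unit vector φ ∈ H orthogonal to the kernel of U − V and a point λ on the unit circle such that Vφ = λ·Uφ and V − U = (λ − 1)·⟨φ, ·⟩Uφ, i.e., Vx = Ux + (λ − 1)·⟨φ, x⟩·Uφ for all x ∈ H. -/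
/-!
Write `U - V = ⟪φ, ·⟫ χ` with `‖φ‖ = 1` (Riesz), so `ker (U - V) = φᗮ`. Since `U` and `V`
agree on `φᗮ` and are isometries, `⟪U y, V φ⟫ = ⟪V y, V φ⟫ = ⟪y, φ⟫ = 0` for `y ⊥ φ`; as `U` is
onto, `V φ ⊥ (U φ)ᗮ`, i.e. `V φ = λ U φ`, with `|λ| = 1` by comparing norms. Then
`χ = (U - V) φ = (1 - λ) U φ`.
-/

open scoped InnerProductSpace
open Module Submodule InnerProductSpace

namespace ContinuousLinearMap

variable {𝕜 E F : Type*} [RCLike 𝕜]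

theorem exists_eq_smulRight_of_finrank_range_eq_one
    [NormedAddCommGroup E] [NormedSpace 𝕜 E] [NormedAddCommGroup F] [NormedSpace 𝕜 F]
    {T : E →L[𝕜] F} (hT : finrank 𝕜 (LinearMap.range (T : E →ₗ[𝕜] F)) = 1) :
    ∃ (f : StrongDual 𝕜 E) (x : F), T = f.smulRight x := by
  obtain ⟨⟨x, _⟩, hx, hspan⟩ := finrank_eq_one_iff'.mp hT
  have hx0 : ‖x‖ ≠ 0 := norm_ne_zero_iff.mpr fun h => hx (Subtype.ext h)
  have hx0' : (‖x‖ : 𝕜) ≠ 0 := RCLike.ofReal_ne_zero.mpr hx0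
  obtain ⟨g, -, hgx⟩ := exists_dual_vector 𝕜 x hx0
  refine ⟨((‖x‖ : 𝕜)⁻¹) • g.comp T, x, ext fun z => ?_⟩
  obtain ⟨c, hc⟩ := hspan ⟨T z, LinearMap.mem_range_self _ z⟩
  have hc : c • x = T z := congrArg Subtype.val hc
  simp only [← hc, smulRight_apply, smul_apply, comp_apply, map_smul, hgx, smul_eq_mul]
  rw [mul_comm c, inv_mul_cancel_left₀ hx0']

theorem exists_eq_rankOne_of_finrank_range_eq_one
    [NormedAddCommGroup E] [InnerProductSpace 𝕜 E] [CompleteSpace E]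
    [NormedAddCommGroup F] [NormedSpace 𝕜 F]
    {T : E →L[𝕜] F} (hT : finrank 𝕜 (LinearMap.range (T : E →ₗ[𝕜] F)) = 1) :
    ∃ (x : F) (y : E), x ≠ 0 ∧ ‖y‖ = 1 ∧ T = rankOne 𝕜 x y := by
  obtain ⟨f, x, rfl⟩ := exists_eq_smulRight_of_finrank_range_eq_one hT
  set y := (toDual 𝕜 E).symm f
  have hfy : f.smulRight x = rankOne 𝕜 x y := by
    ext z
    simp [y, toDual_symm_apply]
  have hT0 : f.smulRight x ≠ 0 := by
    rintro h
    rw [h, toLinearMap_zero, LinearMap.range_zero, finrank_bot] at hT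
    exact zero_ne_one hT
  have hx : x ≠ 0 := by
    rintro rfl
    simp at hT0
  have hy : ‖y‖ ≠ 0 := norm_ne_zero_iff.mpr fun h => hT0 (by simp [hfy, h])
  refine ⟨(‖y‖ : 𝕜) • x, (‖y‖⁻¹ : 𝕜) • y, smul_ne_zero (by exact_mod_cast hy) hx, ?_, ?_⟩
  · simp [norm_smul, hy]
  · ext z
    simp [hfy, smul_smul, hy]

theorem exists_apply_eq_smul_apply_of_eqOn_orthogonal
    [NormedAddCommGroup E] [InnerProductSpace 𝕜 E] [CompleteSpace E]
    {U V : E →L[𝕜] E} (hU : U ∈ unitary (E →L[𝕜] E)) (hV : V ∈ unitary (E →L[𝕜] E)) {φ : E}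
    (h : Set.EqOn U V (𝕜 ∙ φ)ᗮ) : ∃ c : 𝕜, V φ = c • U φ := by
  have hmem : U.adjoint (V φ) ∈ (𝕜 ∙ φ)ᗮᗮ := fun y hy => by
    rw [adjoint_inner_right, h hy, inner_map_map_of_mem_unitary hV]
    exact mem_orthogonal_singleton_iff_inner_left.mp hy
  rw [orthogonal_orthogonal, mem_span_singleton] at hmem
  obtain ⟨c, hc⟩ := hmem
  refine ⟨c, ?_⟩
  rw [← map_smul, hc, ← star_eq_adjoint]
  exact congr($(Unitary.mul_star_self_of_mem hU) (V φ)).symm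

end ContinuousLinearMap

theorem InnerProductSpace.ker_rankOne {𝕜 E F : Type*} [RCLike 𝕜]
    [NormedAddCommGroup E] [NormedSpace 𝕜 E] [NormedAddCommGroup F] [InnerProductSpace 𝕜 F]
    {x : E} (hx : x ≠ 0) (y : F) :
    LinearMap.ker (rankOne 𝕜 x y : F →ₗ[𝕜] E) = (𝕜 ∙ y)ᗮ := by
  ext z
  simp [mem_orthogonal_singleton_iff_inner_right, hx]

/-- If `U` and `V` are unitaries on a Hilbert space and `U - V` has rank one, then
there are a unit vector `φ ⊥ ker(U - V)` and `λ ∈ ∂𝔻` with `Vφ = λ Uφ` and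
`V - U = (λ - 1)⟨φ, ·⟩Uφ`. -/
theorem rankOne_unitary_perturbation_form
    {H : Type*} [NormedAddCommGroup H] [InnerProductSpace ℂ H] [CompleteSpace H]
    (U V : H →L[ℂ] H)
    (hU : U ∈ unitary (H →L[ℂ] H)) (hV : V ∈ unitary (H →L[ℂ] H))
    (hrank : Module.finrank ℂ (LinearMap.range ((U - V : H →L[ℂ] H) : H →ₗ[ℂ] H)) = 1) :
    ∃ (φ : H) (lam : ℂ), ‖φ‖ = 1 ∧ φ ∈ (LinearMap.ker ((U - V : H →L[ℂ] H) : H →ₗ[ℂ] H))ᗮ ∧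
      ‖lam‖ = 1 ∧ V φ = lam • U φ ∧
      ∀ x : H, V x - U x = (lam - 1) • (inner ℂ φ x : ℂ) • U φ := by
  obtain ⟨χ, φ, hχ, hφ, hT⟩ := ContinuousLinearMap.exists_eq_rankOne_of_finrank_range_eq_one hrank
  have hker : LinearMap.ker ((U - V : H →L[ℂ] H) : H →ₗ[ℂ] H) = (ℂ ∙ φ)ᗮ := by
    rw [hT, ker_rankOne hχ]
  obtain ⟨lam, hlam⟩ := ContinuousLinearMap.exists_apply_eq_smul_apply_of_eqOn_orthogonal hU hV
    fun y hy => sub_eq_zero.mp (hker.ge hy)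
  have hχ_eq : χ = (1 - lam) • U φ := by
    have hTφ := congr($hT φ)
    rw [sub_apply, rankOne_apply, inner_self_eq_one_of_norm_eq_one hφ, one_smul, hlam] at hTφ
    rw [← hTφ]
    module
  refine ⟨φ, lam, hφ, hker ▸ le_orthogonal_orthogonal _ (mem_span_singleton_self φ), ?_, hlam,
    fun x => ?_⟩
  · have hVφ := ContinuousLinearMap.norm_map_of_mem_unitary hV φ
    rwa [hlam, norm_smul, ContinuousLinearMap.norm_map_of_mem_unitary hU, hφ, mul_one] at hVφ
  · have hTx := congr($hT x)
    rw [sub_apply, rankOne_apply, hχ_eq] at hTx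
    rw [← neg_sub, hTx]
    module
end

section
/- Let f be a Schur function (an analytic function on the open unit disc with |f(z)| < 1 there) that extends analytically to a neighborhood of an open arc I of the unit circle with |f(z)| = 1 for all z ∈ I. Then any continuous branch of the argument θ ↦ Arg f(e^{iθ}) is strictly monotone increasing on I. -/
open Complex Set Filter Topology

/-!
On the arc, `A` is a continuous lift of the argument of `θ ↦ f(e^{iθ})`, hence differentiable
with `A'(θ) = Re (z f'(z) / f(z))`, `z = e^{iθ}`. Since `|f(r z)|² < 1 = |f(z)|²` for `r < 1`,
the radial derivative of `|f|²` at `z`, namely `2 Re (z f'(z) conj f(z)) = 2 A'(θ)`, is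
nonnegative, so `A` is monotone. If `A` took the same value at two points, `f` would equal a
unimodular constant on the subarc between them; by the identity theorem along a radius, `f(0)`
would be that constant, contradicting `|f(0)| < 1`.
-/

theorem HasDerivAt.nonneg_of_eventually_le_left {φ : ℝ → ℝ} {φ' x : ℝ} (h : HasDerivAt φ φ' x)
    (hle : ∀ᶠ r in 𝓝[<] x, φ r ≤ φ x) : 0 ≤ φ' := by
  refine ge_of_tendsto ((hasDerivAt_iff_tendsto_slope.1 h).mono_left (nhdsLT_le_nhdsNE x)) ?_
  filter_upwards [hle, self_mem_nhdsWithin] with r hr (hrx : r < x)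
  rw [slope_def_field]
  exact div_nonneg_of_nonpos (sub_nonpos.2 hr) (sub_nonpos.2 hrx.le)

theorem re_mul_div_nonneg_of_norm_le_one_on_radius {f : ℂ → ℂ} {f' z : ℂ}
    (hf : HasDerivAt f f' z) (hfz : ‖f z‖ = 1) (hle : ∀ᶠ r : ℝ in 𝓝[<] 1, ‖f (r * z)‖ ≤ 1) :
    0 ≤ (z * f' / f z).re := by
  have hradial : HasDerivAt (fun r : ℝ => f (r * z)) (z * f') 1 := by
    have h := hf.comp_of_eq (1 : ℂ) ((hasDerivAt_id (1 : ℂ)).mul_const z) (one_mul z).symm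
    simpa [mul_comm] using h.comp_ofReal
  have hnorm_sq := hradial.norm_sq.nonneg_of_eventually_le_left (by simpa [hfz] using hle)
  rw [div_eq_mul_inv, inv_eq_conj hfz]
  simpa [Complex.inner] using hnorm_sq

theorem hasDerivAt_of_continuousAt_of_exp_mul_I_eq {u : ℝ → ℂ} {u' : ℂ} {A : ℝ → ℝ} {t : ℝ}
    (hu : HasDerivAt u u' t) (hA : ContinuousAt A t)
    (h : ∀ᶠ θ in 𝓝 t, u θ = exp (A θ * I)) : HasDerivAt A (u' / u t).im t := by
  have hut : u t = exp (A t * I) := h.self_of_nhds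
  have hut0 : u t ≠ 0 := hut ▸ exp_ne_zero _
  have hlog : HasDerivAt (fun θ => log (u θ / u t)) (u' / u t) t := by
    simpa [div_self hut0] using (hu.div_const (u t)).clog_real (by simp [div_self hut0])
  have hclose : ∀ᶠ θ in 𝓝 t, |A θ - A t| < Real.pi := by
    simpa [Real.dist_eq] using Metric.tendsto_nhds.mp hA Real.pi Real.pi_pos
  -- `|A θ - A t| < π` makes `A θ - A t` the principal argument of `u θ / u t`.
  have hloc : (fun θ => A t + (log (u θ / u t)).im) =ᶠ[𝓝 t] A := by
    filter_upwards [h, hclose] with θ hθ hθt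
    rw [hθ, hut, ← exp_sub, ← sub_mul, ← ofReal_sub,
      log_exp (by simpa using (abs_lt.1 hθt).1) (by simpa using (abs_lt.1 hθt).2.le)]
    simp
  exact ((imCLM.hasFDerivAt.comp_hasDerivAt t hlog).const_add (A t)).congr_of_eventuallyEq
    hloc.symm

theorem hasDerivAt_exp_ofReal_mul_I (θ : ℝ) :
    HasDerivAt (fun t : ℝ => exp (t * I)) (exp (θ * I) * I) θ := by
  simpa using ((hasDerivAt_id (θ : ℂ)).mul_const I).cexp.comp_ofReal

theorem hasDerivAt_of_comp_exp_mul_I_eq_exp_mul_I {f : ℂ → ℂ} {A : ℝ → ℝ} {θ : ℝ} {f' : ℂ}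
    (hf : HasDerivAt f f' (exp (θ * I))) (hA : ContinuousAt A θ)
    (hbranch : ∀ᶠ t : ℝ in 𝓝 θ, f (exp (t * I)) = exp (A t * I)) :
    HasDerivAt A (exp (θ * I) * f' / f (exp (θ * I))).re θ := by
  have h := hasDerivAt_of_continuousAt_of_exp_mul_I_eq
    (hf.comp_of_eq θ (hasDerivAt_exp_ofReal_mul_I θ) rfl) hA hbranch
  rwa [Function.comp_apply, show f' * (exp (θ * I) * I) / f (exp (θ * I)) =
    exp (θ * I) * f' / f (exp (θ * I)) * I by ring, mul_I_im] at h

theorem segment_zero_subset_insert_ball {E : Type*} [NormedAddCommGroup E] [NormedSpace ℝ E]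
    {z : E} {r : ℝ} (hr : 0 < r) (hz : ‖z‖ ≤ r) :
    segment ℝ 0 z ⊆ insert z (Metric.ball 0 r) := by
  rw [← insert_endpoints_openSegment]
  have hopen : openSegment ℝ 0 z ⊆ Metric.ball 0 r := by
    simpa [Metric.isOpen_ball.interior_eq] using
      (convex_ball (0 : E) r).openSegment_interior_closure_subset_interior
        (by simpa [Metric.isOpen_ball.interior_eq] using hr)
        (by simpa [closure_ball (0 : E) hr.ne'] using hz)
  rintro w (rfl | rfl | hw)
  · exact Or.inr (by simpa using hr)
  · exact Or.inl rfl
  · exact Or.inr (hopen hw)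

theorem AnalyticOnNhd.eq_of_frequently_eq_of_segment {F : Type*} [NormedAddCommGroup F]
    [NormedSpace ℂ F] {f : ℂ → F} {w z : ℂ} {c : F} (hf : AnalyticOnNhd ℂ f (segment ℝ w z))
    (h : ∃ᶠ ζ in 𝓝[≠] z, f ζ = c) : f w = c :=
  hf.eqOn_of_preconnected_of_frequently_eq analyticOnNhd_const
    (convex_segment w z).isPreconnected (right_mem_segment ℝ w z) h (left_mem_segment ℝ w z)

theorem schur_arg_monotoneOn_on_arc {f : ℂ → ℂ} {A : ℝ → ℝ} {a b : ℝ}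
    (hf : ∀ θ ∈ Ioo a b, DifferentiableAt ℂ f (exp (θ * I)))
    (hSchur : ∀ z ∈ Metric.ball (0 : ℂ) 1, ‖f z‖ < 1)
    (hmod : ∀ θ ∈ Ioo a b, ‖f (exp (θ * I))‖ = 1) (hA : ContinuousOn A (Ioo a b))
    (hbranch : ∀ θ ∈ Ioo a b, f (exp (θ * I)) = exp (A θ * I)) :
    MonotoneOn A (Ioo a b) := by
  refine monotoneOn_of_hasDerivWithinAt_nonneg (convex_Ioo a b) hA
    (f' := fun θ => (exp (θ * I) * deriv f (exp (θ * I)) / f (exp (θ * I))).re)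
    (fun θ hθ => ?_) fun θ hθ => ?_ <;> rw [interior_Ioo] at hθ
  · have hnhds : Ioo a b ∈ 𝓝 θ := Ioo_mem_nhds hθ.1 hθ.2
    exact (hasDerivAt_of_comp_exp_mul_I_eq_exp_mul_I (hf θ hθ).hasDerivAt
      (hA.continuousAt hnhds) (eventually_of_mem hnhds hbranch)).hasDerivWithinAt
  · refine re_mul_div_nonneg_of_norm_le_one_on_radius (hf θ hθ).hasDerivAt (hmod θ hθ) ?_
    filter_upwards [Ioo_mem_nhdsLT zero_lt_one] with r hr
    exact (hSchur _ (by simpa [abs_of_pos hr.1] using hr.2)).le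

theorem schur_arg_strictMono_on_arc_general
    (f : ℂ → ℂ) (S : Set ℂ) (hSopen : IsOpen S)
    (hball : Metric.ball (0 : ℂ) 1 ⊆ S)
    (a b : ℝ)
    (harc : ∀ θ ∈ Ioo a b, Complex.exp (θ * I) ∈ S)
    (hf : AnalyticOn ℂ f S)
    (hSchur : ∀ z ∈ Metric.ball (0 : ℂ) 1, ‖f z‖ < 1)
    (hmod : ∀ θ ∈ Ioo a b, ‖f (Complex.exp (θ * I))‖ = 1)
    (A : ℝ → ℝ) (hA : ContinuousOn A (Ioo a b))
    (hbranch : ∀ θ ∈ Ioo a b, f (Complex.exp (θ * I)) = Complex.exp (A θ * I)) :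
    StrictMonoOn A (Ioo a b) := by
  have hfS : AnalyticOnNhd ℂ f S := hSopen.analyticOn_iff_analyticOnNhd.mp hf
  have hmono : MonotoneOn A (Ioo a b) := schur_arg_monotoneOn_on_arc
    (fun θ hθ => (hfS _ (harc θ hθ)).differentiableAt) hSchur hmod hA hbranch
  intro x hx y hy hxy
  refine (hmono hx hy hxy.le).lt_of_ne fun hAxy => ?_
  have hxy_sub : Ioo x y ⊆ Ioo a b := Ioo_subset_Ioo hx.1.le hy.2.le
  have hconst : ∀ θ ∈ Ioo x y, f (exp (θ * I)) = exp (A x * I) := fun θ hθ => by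
    have hAθ : A θ = A x :=
      le_antisymm (hAxy ▸ hmono (hxy_sub hθ) hy hθ.2.le) (hmono hx (hxy_sub hθ) hθ.1.le)
    rw [hbranch θ (hxy_sub hθ), hAθ]
  obtain ⟨θ, hθ⟩ : (Ioo x y).Nonempty := nonempty_Ioo.2 hxy
  have hfreq : ∃ᶠ ζ in 𝓝[≠] exp (θ * I), f ζ = exp (A x * I) := by
    have hnear : ∀ᶠ t : ℝ in 𝓝[≠] θ, f (exp (t * I)) = exp (A x * I) :=
      eventually_nhdsWithin_of_eventually_nhds (eventually_of_mem (Ioo_mem_nhds hθ.1 hθ.2) hconst)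
    exact ((hasDerivAt_exp_ofReal_mul_I θ).tendsto_nhdsNE
      (mul_ne_zero (exp_ne_zero _) I_ne_zero)).frequently hnear.frequently
  have hseg : segment ℝ 0 (exp (θ * I)) ⊆ S :=
    (segment_zero_subset_insert_ball one_pos (norm_exp_ofReal_mul_I θ).le).trans
      (insert_subset (harc θ (hxy_sub hθ)) hball)
  have hf0 := (hfS.mono hseg).eq_of_frequently_eq_of_segment hfreq
  simpa [hf0] using hSchur 0 (Metric.mem_ball_self one_pos)

/-- If a Schur function `f` (analytic on `𝔻` with `|f| < 1`) extends analytically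
across an open arc `{e^{iθ} : θ ∈ (a, b)}` of the unit circle with `|f| = 1` on the
arc, then any continuous branch `A` of the argument, `f(e^{iθ}) = e^{i A(θ)}`, is
strictly monotone increasing there. -/
theorem schur_arg_strictMono_on_arc
    (f : ℂ → ℂ) (S : Set ℂ) (hSopen : IsOpen S)
    (hball : Metric.ball (0 : ℂ) 1 ⊆ S)
    (a b : ℝ) (hab : a < b) (hlen : b - a < 2 * Real.pi)
    (harc : ∀ θ ∈ Ioo a b, Complex.exp (θ * I) ∈ S)
    (hf : AnalyticOn ℂ f S)
    (hSchur : ∀ z ∈ Metric.ball (0 : ℂ) 1, ‖f z‖ < 1)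
    (hmod : ∀ θ ∈ Ioo a b, ‖f (Complex.exp (θ * I))‖ = 1)
    (A : ℝ → ℝ) (hA : ContinuousOn A (Ioo a b))
    (hbranch : ∀ θ ∈ Ioo a b, f (Complex.exp (θ * I)) = Complex.exp (A θ * I)) :
    StrictMonoOn A (Ioo a b) :=
  schur_arg_strictMono_on_arc_general f S hSopen hball a b harc hf hSchur hmod A hA hbranch
end

section
/- Let U be a unitary operator on a complex Hilbert space H, let φ ∈ H be a unit vector, let λ be on the unit circle, and let V = U + (λ − 1)·⟨φ, ·⟩Uφ (which is unitary). For a unitary A and z in the open unit disc, define F_{A,φ}(z) = ⟨φ, (A + z)(A − z)^{−1} φ⟩ and f_{A,φ}(z) = z^{−1}(1 − F_{A,φ}(z))(1 + F_{A,φ}(z))^{−1}. Then for every z in the open unit disc with z ≠ 0, f_{V,φ}(z) = λ^{−1}·f_{U,φ}(z). -/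
/-!
Write `g_A(z) = ⟪φ, (A - z)⁻¹ φ⟫`. Since `(A + z)(A - z)⁻¹ = 1 + 2z (A - z)⁻¹`, we get
`F_{A,φ} = 1 + 2z g_A` and `f_{A,φ} = -g_A / (1 + z g_A)`. The operator
`V = U (1 + (λ - 1) P_φ)`, with `P_φ` the projection onto `ℂ φ`, is unitary, and it is a rank-one
perturbation of `U`; solving `(V - z) ψ = φ` through `(U - z)⁻¹` and using
`(U - z)⁻¹ U φ = φ + z (U - z)⁻¹ φ` gives `g_V = g_U - (λ - 1) g_V (1 + z g_U)`, i.e.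
`λ g_V (1 + z g_U) = g_U (1 + z g_V)`, which is the claim.
-/

/-- The Carathéodory function `F_{A,φ}(z) = ⟨φ, (A + z)(A - z)⁻¹ φ⟩`. -/
noncomputable def caratheodoryF {H : Type*} [NormedAddCommGroup H]
    [InnerProductSpace ℂ H] [CompleteSpace H] (A : H →L[ℂ] H) (φ : H) (z : ℂ) : ℂ :=
  inner ℂ φ (((A + z • (1 : H →L[ℂ] H)) * Ring.inverse (A - z • (1 : H →L[ℂ] H))) φ)

/-- The Schur function `f_{A,φ}(z) = z⁻¹ (1 - F_{A,φ}(z))(1 + F_{A,φ}(z))⁻¹`. -/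
noncomputable def schurF {H : Type*} [NormedAddCommGroup H]
    [InnerProductSpace ℂ H] [CompleteSpace H] (A : H →L[ℂ] H) (φ : H) (z : ℂ) : ℂ :=
  z⁻¹ * (1 - caratheodoryF A φ z) * (1 + caratheodoryF A φ z)⁻¹

section

open ContinuousLinearMap InnerProductSpace

theorem IsStarProjection.one_add_smul_mem_unitary {R A : Type*} [CommRing R] [StarRing R]
    [Ring A] [StarRing A] [Algebra R A] [StarModule R A] {p : A} (hp : IsStarProjection p)
    {u : R} (hu : u ∈ unitary R) : 1 + (u - 1) • p ∈ unitary A := by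
  have mul_eq (a b : R) : (1 + a • p) * (1 + b • p) = 1 + (a + b + a * b) • p := by
    simp only [add_mul, mul_add, one_mul, mul_one, smul_mul_smul, hp.isIdempotentElem.eq,
      add_smul]
    abel
  have hstar : star (1 + (u - 1) • p) = 1 + (star u - 1) • p := by
    simp [hp.isSelfAdjoint.star_eq]
  rw [Unitary.mem_iff, hstar, mul_eq, mul_eq]
  constructor
  · rw [show star u - 1 + (u - 1) + (star u - 1) * (u - 1) = star u * u - 1 by ring,
      Unitary.star_mul_self_of_mem hu, sub_self, zero_smul, add_zero]
  · rw [show u - 1 + (star u - 1) + (u - 1) * (star u - 1) = u * star u - 1 by ring,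
      Unitary.mul_star_self_of_mem hu, sub_self, zero_smul, add_zero]

variable {H : Type*} [NormedAddCommGroup H] [InnerProductSpace ℂ H]

theorem isUnit_sub_smul_one_of_mem_unitary [CompleteSpace H] {A : H →L[ℂ] H}
    (hA : A ∈ unitary (H →L[ℂ] H)) {z : ℂ} (hz : ‖z‖ < 1) : IsUnit (A - z • 1) := by
  have hz : z ∉ spectrum ℂ A := fun h => hz.ne (spectrum.norm_eq_one_of_unitary hA h)
  rw [spectrum.notMem_iff, ← IsUnit.neg_iff, neg_sub, Algebra.algebraMap_eq_smul_one] at hz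
  exact hz

theorem add_smul_rankOne_mem_unitary [CompleteSpace H] {U : H →L[ℂ] H}
    (hU : U ∈ unitary (H →L[ℂ] H)) {φ : H} (hφ : ‖φ‖ = 1) {lam : ℂ} (hlam : ‖lam‖ = 1) :
    U + (lam - 1) • rankOne ℂ (U φ) φ ∈ unitary (H →L[ℂ] H) := by
  have hlam : lam ∈ unitary ℂ := Unitary.mem_iff_star_mul_self.mpr <| by
    rw [RCLike.star_def, RCLike.conj_mul, hlam]; norm_num
  have h_mul : U + (lam - 1) • rankOne ℂ (U φ) φ = U * (1 + (lam - 1) • rankOne ℂ φ φ) := by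
    rw [mul_add, mul_one, mul_smul_comm, mul_def, comp_rankOne]
  rw [h_mul]
  exact Submonoid.mul_mem _ hU
    ((isStarProjection_rankOne_self hφ).one_add_smul_mem_unitary hlam)

noncomputable def resolventInner (A : H →L[ℂ] H) (φ : H) (z : ℂ) : ℂ :=
  ⟪φ, Ring.inverse (A - z • 1) φ⟫_ℂ

theorem caratheodoryF_eq_one_add_resolventInner [CompleteSpace H] {A : H →L[ℂ] H} {φ : H}
    (hφ : ‖φ‖ = 1) {z : ℂ} (hA : IsUnit (A - z • 1)) :
    caratheodoryF A φ z = 1 + 2 * z * resolventInner A φ z := by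
  have hsplit : A + z • 1 = (A - z • 1) + (2 * z) • 1 := by module
  rw [caratheodoryF, hsplit, add_mul, Ring.mul_inverse_cancel _ hA, smul_mul_assoc, one_mul,
    add_apply, smul_apply, one_apply_eq_self, inner_add_right, inner_smul_right,
    inner_self_eq_norm_sq_to_K, hφ, resolventInner]
  norm_num

theorem schurF_eq_neg_div [CompleteSpace H] {A : H →L[ℂ] H} {φ : H} (hφ : ‖φ‖ = 1) {z : ℂ}
    (hz : z ≠ 0) (hA : IsUnit (A - z • 1)) :
    schurF A φ z = -resolventInner A φ z / (1 + z * resolventInner A φ z) := by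
  set g := resolventInner A φ z
  rw [schurF, caratheodoryF_eq_one_add_resolventInner hφ hA,
    show 1 - (1 + 2 * z * g) = z * (-2 * g) by ring,
    show 1 + (1 + 2 * z * g) = 2 * (1 + z * g) by ring, inv_mul_cancel_left₀ hz, mul_inv]
  ring

theorem inner_inverse_sub_smul_one_apply_self {A : H →L[ℂ] H} {φ : H} (hφ : ‖φ‖ = 1) {z : ℂ}
    (hA : IsUnit (A - z • 1)) :
    ⟪φ, Ring.inverse (A - z • 1) (A φ)⟫_ℂ = 1 + z * resolventInner A φ z := by
  have hφ_split : A φ = (A - z • 1) φ + z • φ := by simp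
  rw [hφ_split, map_add, map_smul, ← mul_apply_eq_comp, Ring.inverse_mul_cancel _ hA,
    one_apply_eq_self, inner_add_right, inner_smul_right, inner_self_eq_norm_sq_to_K, hφ,
    resolventInner]
  norm_num

theorem resolventInner_eq_of_eq_add_rankOne {U V : H →L[ℂ] H} {φ x : H} {z : ℂ}
    (hV : V = U + rankOne ℂ x φ) (hUz : IsUnit (U - z • 1)) (hVz : IsUnit (V - z • 1)) :
    resolventInner V φ z =
      resolventInner U φ z - resolventInner V φ z * ⟪φ, Ring.inverse (U - z • 1) x⟫_ℂ := by
  subst hV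
  rw [resolventInner, resolventInner]
  set ψ := Ring.inverse (U + rankOne ℂ x φ - z • 1) φ
  have hψ : (U - z • 1) ψ = φ - ⟪φ, ψ⟫_ℂ • x := by
    have h := congr($(Ring.mul_inverse_cancel _ hVz) φ)
    simp only [mul_apply_eq_comp, sub_apply, add_apply, rankOne_apply, smul_apply,
      one_apply_eq_self] at h ⊢
    linear_combination (norm := module) h
  have hψ_eq := congr(Ring.inverse (U - z • 1) $hψ)
  rw [← mul_apply_eq_comp, Ring.inverse_mul_cancel _ hUz, one_apply_eq_self, map_sub,
    map_smul] at hψ_eq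
  conv_lhs => rw [hψ_eq]
  rw [inner_sub_right, inner_smul_right, mul_comm]

theorem div_one_add_mul_eq_inv_mul_div {K : Type*} [Field K] {c g z lam : K} (hlam : lam ≠ 0)
    (h : c = g - c * ((lam - 1) * (1 + z * g))) :
    c / (1 + z * c) = lam⁻¹ * (g / (1 + z * g)) := by
  have key : c * (lam * (1 + z * g)) = g * (1 + z * c) := by linear_combination h
  by_cases hg : 1 + z * g = 0
  -- then also `1 + z * c = 0`, and both sides are `_ / 0 = 0`
  · have hc : 1 + z * c = 0 := by linear_combination (1 - z * (lam - 1) * c) * hg + z * h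
    simp [hg, hc]
  · have hc : 1 + z * c ≠ 0 := by
      intro hc
      have c_eq : c = 0 := by simpa [hc, hlam, hg] using key
      simp [c_eq] at hc
    rw [← div_eq_inv_mul, div_div, div_eq_div_iff hc (mul_ne_zero hg hlam)]
    linear_combination key

end

/-- **Proposition 2.2**. If `V = U + (λ - 1)⟨φ, ·⟩Uφ` with `U` unitary, `‖φ‖ = 1`,
`|λ| = 1`, then `f_{V,φ}(z) = λ⁻¹ f_{U,φ}(z)` on `𝔻 \ {0}`. -/
theorem schurF_rankOne_perturbation
    {H : Type*} [NormedAddCommGroup H] [InnerProductSpace ℂ H] [CompleteSpace H]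
    (U V : H →L[ℂ] H) (hU : U ∈ unitary (H →L[ℂ] H))
    (φ : H) (hφ : ‖φ‖ = 1) (lam : ℂ) (hlam : ‖lam‖ = 1)
    (hV : ∀ x : H, V x = U x + (lam - 1) • (inner ℂ φ x : ℂ) • U φ) :
    ∀ z ∈ Metric.ball (0 : ℂ) 1, z ≠ 0 → schurF V φ z = lam⁻¹ * schurF U φ z := by
  intro z hz hz0
  rw [mem_ball_zero_iff] at hz
  have hV_eq : V = U + (lam - 1) • InnerProductSpace.rankOne ℂ (U φ) φ := by
    ext x; simp [hV, smul_comm (lam - 1)]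
  have hUz := isUnit_sub_smul_one_of_mem_unitary hU hz
  have hVz := isUnit_sub_smul_one_of_mem_unitary
    (hV_eq ▸ add_smul_rankOne_mem_unitary hU hφ hlam) hz
  have hres := resolventInner_eq_of_eq_add_rankOne (φ := φ) (x := (lam - 1) • U φ)
    (by rw [hV_eq, (InnerProductSpace.rankOne ℂ).map_smul]; rfl) hUz hVz
  rw [map_smul, inner_smul_right, inner_inverse_sub_smul_one_apply_self hφ hUz] at hres
  rw [schurF_eq_neg_div hφ hz0 hVz, schurF_eq_neg_div hφ hz0 hUz, neg_div, neg_div, mul_neg,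
    neg_inj]
  exact div_one_add_mul_eq_inv_mul_div (norm_ne_zero_iff.mp (hlam ▸ one_ne_zero)) hres
end

section
/- Let H = K1 ⊕ K2 be an orthogonal direct sum of finite-dimensional complex Hilbert spaces, let U = U1 ⊕ U2 with U_j unitary on K_j, let φ_j be a cyclic vector for U_j on K_j (j = 1, 2), and let φ = a·φ1 ⊕ b·φ2 with a ≠ 0 and b ≠ 0. Then φ is a cyclic vector for U if and only if U1 and U2 have no eigenvalue in common. -/
/-!
If `U₁` and `U₂` share an eigenvalue `μ`, then `ker (U - μ)` is at least two-dimensional. But a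
cyclic vector `φ` forces `dim ker (U - μ) ≤ 1`: the subspace `range (U - μ) + ℂ φ` is `U`-invariant
and contains `φ`, hence is everything.

Conversely, if `φ` is not cyclic, the orthogonal complement of its cyclic subspace is a nonzero
`U†`-invariant subspace, so it contains an eigenvector of `U†`, which is also an eigenvector of the
unitary `U`. Its components in `K₁` and `K₂` are eigenvectors for the same eigenvalue, and neither
vanishes: a nonzero eigenvector `v ∈ Kⱼ` is never orthogonal to `φⱼ`, since `(ℂ v)ᗮ` is
`U`-invariant and so would contain the whole cyclic subspace `Kⱼ` of `φⱼ`.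
-/

open Module Submodule
open scoped InnerProductSpace InnerProduct

namespace Module.End

variable {R M : Type*} [Semiring R] [AddCommMonoid M] [Module R M]

def cyclicSubspace (f : End R M) (x : M) : Submodule R M :=
  span R {y | ∃ k : ℕ, y = (f ^ k) x}

theorem self_mem_cyclicSubspace (f : End R M) (x : M) : x ∈ f.cyclicSubspace x :=
  subset_span ⟨0, by rw [pow_zero, one_apply]⟩

theorem cyclicSubspace_mem_invtSubmodule (f : End R M) (x : M) :
    f.cyclicSubspace x ∈ f.invtSubmodule := by
  rw [mem_invtSubmodule, cyclicSubspace, span_le]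
  rintro _ ⟨k, rfl⟩
  exact subset_span ⟨k + 1, by rw [pow_succ', mul_apply]⟩

theorem cyclicSubspace_le {f : End R M} {x : M} {p : Submodule R M} (hx : x ∈ p)
    (hp : p ∈ f.invtSubmodule) : f.cyclicSubspace x ≤ p := by
  rw [cyclicSubspace, span_le]
  rintro _ ⟨k, rfl⟩
  induction k with
  | zero => rwa [pow_zero, one_apply]
  | succ k ih => rw [pow_succ', mul_apply]; exact hp ih

theorem span_singleton_mem_invtSubmodule {f : End R M} {v : M} {μ : R} (h : f v = μ • v) :
    (R ∙ v) ∈ f.invtSubmodule := by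
  rw [mem_invtSubmodule, span_singleton_le_iff_mem, mem_comap, h]
  exact smul_mem _ μ (mem_span_singleton_self v)

theorem apply_eq_smul_of_apply_add_eq_smul {R M : Type*} [Ring R] [AddCommGroup M] [Module R M]
    {f : End R M} {p q : Submodule R M} (hpq : Disjoint p q) (hp : p ∈ f.invtSubmodule)
    (hq : q ∈ f.invtSubmodule) {y z : M} (hy : y ∈ p) (hz : z ∈ q) {μ : R}
    (h : f (y + z) = μ • (y + z)) : f y = μ • y ∧ f z = μ • z := by
  have hyz : f y - μ • y = -(f z - μ • z) := eq_neg_of_add_eq_zero_left <| by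
    rw [sub_add_sub_comm, ← map_add, ← smul_add, h, sub_self]
  have hy' : f y - μ • y = 0 := disjoint_def'.1 hpq _ (sub_mem (hp hy) (smul_mem _ μ hy)) _
    (neg_mem (sub_mem (hq hz) (smul_mem _ μ hz))) hyz
  rw [hy', eq_comm, neg_eq_zero] at hyz
  exact ⟨sub_eq_zero.1 hy', sub_eq_zero.1 hyz⟩

section Field

variable {K V : Type*} [Field K] [AddCommGroup V] [Module K V] [FiniteDimensional K V]

theorem exists_eigenvector_mem_of_mem_invtSubmodule [IsAlgClosed K] {f : End K V}
    {p : Submodule K V} (hp : p ∈ f.invtSubmodule) (hp0 : p ≠ ⊥) :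
    ∃ v ∈ p, v ≠ 0 ∧ ∃ μ : K, f v = μ • v := by
  have : Nontrivial p := nontrivial_iff_ne_bot.2 hp0
  obtain ⟨μ, hμ⟩ :=
    exists_eigenvalue (f.restrict ((mem_invtSubmodule_iff_forall_mem_of_mem f).1 hp))
  obtain ⟨⟨v, hvp⟩, hv⟩ := hμ.exists_hasEigenvector
  refine ⟨v, hvp, fun h => hv.2 (Subtype.ext h), μ, ?_⟩
  simpa using congrArg Subtype.val hv.apply_eq_smul

theorem finrank_eigenspace_le_one_of_cyclicSubspace_eq_top {f : End K V} {x : V}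
    (hx : f.cyclicSubspace x = ⊤) (μ : K) : finrank K (f.eigenspace μ) ≤ 1 := by
  rw [eigenspace_def]
  set g := f - μ • 1
  -- any submodule containing the range of `f - μ` is `f`-invariant
  have hinv : LinearMap.range g ⊔ (K ∙ x) ∈ f.invtSubmodule := by
    rw [mem_invtSubmodule_iff_forall_mem_of_mem]
    intro y hy
    have hfy : f y = g y + μ • y := by simp [g]
    rw [hfy]
    exact add_mem (mem_sup_left (LinearMap.mem_range_self g y)) (smul_mem _ μ hy)
  have htop : LinearMap.range g ⊔ (K ∙ x) = ⊤ :=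
    top_unique (hx ▸ cyclicSubspace_le (mem_sup_right (mem_span_singleton_self x)) hinv)
  have hsup := finrank_add_le_finrank_add_finrank (LinearMap.range g) (K ∙ x)
  rw [htop, finrank_top, ← LinearMap.finrank_range_add_finrank_ker g] at hsup
  have hx1 : finrank K (K ∙ x) ≤ 1 := (finrank_span_le_card {x}).trans (by simp)
  omega

theorem cyclicSubspace_ne_top_of_disjoint {f : End K V} {p q : Submodule K V}
    (hpq : Disjoint p q) {v w : V} (hv : v ∈ p) (hw : w ∈ q) (hv0 : v ≠ 0) (hw0 : w ≠ 0)
    {μ : K} (hfv : f v = μ • v) (hfw : f w = μ • w) (x : V) : f.cyclicSubspace x ≠ ⊤ := by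
  intro hx
  have hdisj : Disjoint (K ∙ v) (K ∙ w) :=
    hpq.mono ((span_singleton_le_iff_mem _ _).2 hv) ((span_singleton_le_iff_mem _ _).2 hw)
  have hle : (K ∙ v) ⊔ (K ∙ w) ≤ f.eigenspace μ := by
    simp only [sup_le_iff, span_singleton_le_iff_mem, mem_eigenspace_iff]
    exact ⟨hfv, hfw⟩
  have hsup := finrank_sup_add_finrank_inf_eq (K ∙ v) (K ∙ w)
  rw [hdisj.eq_bot, finrank_bot, finrank_span_singleton hv0, finrank_span_singleton hw0] at hsup
  have h2 := Submodule.finrank_mono hle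
  have h1 := finrank_eigenspace_le_one_of_cyclicSubspace_eq_top hx μ
  omega

end Field

end Module.End

theorem ContinuousLinearMap.span_pow_apply_eq_cyclicSubspace {R M : Type*} [Semiring R]
    [AddCommMonoid M] [Module R M] [TopologicalSpace M] (T : M →L[R] M) (x : M) :
    span R {y | ∃ k : ℕ, y = (T ^ k) x} = End.cyclicSubspace (T : M →ₗ[R] M) x := by
  simp only [End.cyclicSubspace, ← ContinuousLinearMap.toLinearMap_pow, ContinuousLinearMap.coe_coe]

section InnerProductSpace

open ContinuousLinearMap Module.End

variable {𝕜 E : Type*} [RCLike 𝕜] [NormedAddCommGroup E] [InnerProductSpace 𝕜 E]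

theorem Submodule.inner_add_add_of_mem_orthogonal {K : Submodule 𝕜 E} {x₁ y₁ x₂ y₂ : E}
    (hx₁ : x₁ ∈ K) (hy₁ : y₁ ∈ K) (hx₂ : x₂ ∈ Kᗮ) (hy₂ : y₂ ∈ Kᗮ) :
    ⟪x₁ + x₂, y₁ + y₂⟫_𝕜 = ⟪x₁, y₁⟫_𝕜 + ⟪x₂, y₂⟫_𝕜 := by
  rw [inner_add_left, inner_add_right, inner_add_right, inner_right_of_mem_orthogonal hx₁ hy₂,
    inner_left_of_mem_orthogonal hy₁ hx₂, add_zero, zero_add]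

variable [CompleteSpace E]

theorem adjoint_apply_eq_inv_smul_of_mem_unitary {U : E →L[𝕜] E}
    (hU : U ∈ unitary (E →L[𝕜] E)) {v : E} {μ : 𝕜} (h : U v = μ • v) : (U†) v = μ⁻¹ • v := by
  have hv : v = μ • (U†) v := by
    rw [← map_smul, ← h, ← star_eq_adjoint, ← mul_apply_eq_comp, Unitary.star_mul_self_of_mem hU,
      one_apply_eq_self]
  rcases eq_or_ne μ 0 with rfl | hμ
  · rw [zero_smul] at hv
    simp [hv]
  · rw [eq_inv_smul_iff₀ hμ, ← hv]

theorem inner_ne_zero_of_mem_cyclicSubspace {U : E →L[𝕜] E} (hU : U ∈ unitary (E →L[𝕜] E))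
    {x v : E} (hvx : v ∈ cyclicSubspace (U : E →ₗ[𝕜] E) x) (hv : v ≠ 0) {μ : 𝕜}
    (hUv : U v = μ • v) : ⟪x, v⟫_𝕜 ≠ 0 := by
  intro hxv
  have hinv : (𝕜 ∙ v)ᗮ ∈ invtSubmodule (U : E →ₗ[𝕜] E) := orthogonal_mem_invtSubmodule
    (span_singleton_mem_invtSubmodule (adjoint_apply_eq_inv_smul_of_mem_unitary hU hUv))
  have hle := cyclicSubspace_le (mem_orthogonal_singleton_iff_inner_left.2 hxv) hinv
  exact hv (inner_self_eq_zero.1 (mem_orthogonal_singleton_iff_inner_left.1 (hle hvx)))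

end InnerProductSpace

open ContinuousLinearMap Module.End in
theorem exists_common_eigenvalue_of_cyclicSubspace_ne_top {H : Type*} [NormedAddCommGroup H]
    [InnerProductSpace ℂ H] [FiniteDimensional ℂ H] {U : H →L[ℂ] H}
    (hU : U ∈ unitary (H →L[ℂ] H)) {K : Submodule ℂ H} {φ₁ φ₂ : H}
    (h₁ : cyclicSubspace (U : H →ₗ[ℂ] H) φ₁ = K) (h₂ : cyclicSubspace (U : H →ₗ[ℂ] H) φ₂ = Kᗮ)
    {a b : ℂ} (ha : a ≠ 0) (hb : b ≠ 0)
    (h : cyclicSubspace (U : H →ₗ[ℂ] H) (a • φ₁ + b • φ₂) ≠ ⊤) :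
    ∃ μ : ℂ, ∃ v₁ ∈ K, v₁ ≠ 0 ∧ U v₁ = μ • v₁ ∧ ∃ v₂ ∈ Kᗮ, v₂ ≠ 0 ∧ U v₂ = μ • v₂ := by
  have : CompleteSpace H := FiniteDimensional.complete ℂ H
  set S := cyclicSubspace (U : H →ₗ[ℂ] H) (a • φ₁ + b • φ₂)
  have hSinv : Sᗮ ∈ invtSubmodule (U† : H →ₗ[ℂ] H) := orthogonal_mem_invtSubmodule
    (by rw [adjoint_adjoint]; exact cyclicSubspace_mem_invtSubmodule _ _)
  obtain ⟨v, hvS, hv0, ν, hν⟩ :=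
    exists_eigenvector_mem_of_mem_invtSubmodule hSinv (by rwa [Ne, orthogonal_eq_bot_iff])
  have hUv : U v = ν⁻¹ • v := by
    simpa [star_eq_adjoint] using adjoint_apply_eq_inv_smul_of_mem_unitary (Unitary.star_mem hU) hν
  obtain ⟨y₁, hy₁, y₂, hy₂, rfl⟩ := K.exists_add_mem_mem_orthogonal v
  obtain ⟨hUy₁, hUy₂⟩ := apply_eq_smul_of_apply_add_eq_smul K.orthogonal_disjoint
    (h₁ ▸ cyclicSubspace_mem_invtSubmodule _ _) (h₂ ▸ cyclicSubspace_mem_invtSubmodule _ _)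
    hy₁ hy₂ hUv
  have horth : starRingEnd ℂ a * ⟪φ₁, y₁⟫_ℂ + starRingEnd ℂ b * ⟪φ₂, y₂⟫_ℂ = 0 := by
    rw [← inner_smul_left, ← inner_smul_left, ← inner_add_add_of_mem_orthogonal
      (K.smul_mem a (h₁ ▸ self_mem_cyclicSubspace _ _)) hy₁
      (Kᗮ.smul_mem b (h₂ ▸ self_mem_cyclicSubspace _ _)) hy₂]
    exact inner_right_of_mem_orthogonal (self_mem_cyclicSubspace _ _) hvS
  refine ⟨ν⁻¹, y₁, hy₁, ?_, hUy₁, y₂, hy₂, ?_, hUy₂⟩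
  · rintro rfl
    rw [zero_add] at hv0
    simp only [inner_zero_right, mul_zero, zero_add, mul_eq_zero, map_eq_zero, hb,
      false_or] at horth
    exact inner_ne_zero_of_mem_cyclicSubspace hU (h₂ ▸ hy₂) hv0 hUy₂ horth
  · rintro rfl
    rw [add_zero] at hv0
    simp only [inner_zero_right, mul_zero, add_zero, mul_eq_zero, map_eq_zero, ha,
      false_or] at horth
    exact inner_ne_zero_of_mem_cyclicSubspace hU (h₁ ▸ hy₁) hv0 hUy₁ horth

theorem directSum_cyclic_iff_no_common_eigenvalue_general
    {H : Type*} [NormedAddCommGroup H] [InnerProductSpace ℂ H] [FiniteDimensional ℂ H]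
    (K1 K2 : Submodule ℂ H) (hperp : K2 = K1ᗮ)
    (U : H →L[ℂ] H) (hU : U ∈ unitary (H →L[ℂ] H))
    (φ1 φ2 : H)
    (hcyc1 : Submodule.span ℂ {x | ∃ k : ℕ, x = (U ^ k) φ1} = K1)
    (hcyc2 : Submodule.span ℂ {x | ∃ k : ℕ, x = (U ^ k) φ2} = K2)
    (a b : ℂ) (ha : a ≠ 0) (hb : b ≠ 0) :
    Submodule.span ℂ {x | ∃ k : ℕ, x = (U ^ k) (a • φ1 + b • φ2)} = ⊤ ↔
      {μ : ℂ | ∃ v ∈ K1, v ≠ 0 ∧ U v = μ • v} ∩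
        {μ : ℂ | ∃ v ∈ K2, v ≠ 0 ∧ U v = μ • v} = ∅ := by
  subst hperp
  simp only [ContinuousLinearMap.span_pow_apply_eq_cyclicSubspace] at hcyc1 hcyc2 ⊢
  rw [Set.eq_empty_iff_forall_notMem]
  constructor
  · rintro hφ μ ⟨⟨v₁, hv₁, hv₁0, hUv₁⟩, v₂, hv₂, hv₂0, hUv₂⟩
    exact Module.End.cyclicSubspace_ne_top_of_disjoint K1.orthogonal_disjoint hv₁ hv₂ hv₁0 hv₂0
      hUv₁ hUv₂ (a • φ1 + b • φ2) hφ
  · intro hnone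
    by_contra hφ
    obtain ⟨μ, v₁, hv₁, hv₁0, hUv₁, v₂, hv₂, hv₂0, hUv₂⟩ :=
      exists_common_eigenvalue_of_cyclicSubspace_ne_top hU hcyc1 hcyc2 ha hb hφ
    exact hnone μ ⟨⟨v₁, hv₁, hv₁0, hUv₁⟩, v₂, hv₂, hv₂0, hUv₂⟩

/-- **Remark after Proposition 2.6**. With `H = K1 ⊕ K2`, `U = U1 ⊕ U2` unitary,
`φⱼ` cyclic for `U` restricted to `Kⱼ`, and `φ = a φ1 + b φ2` with `a, b ≠ 0`:
`φ` is cyclic for `U` if and only if `U1` and `U2` have no eigenvalue in common. -/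
theorem directSum_cyclic_iff_no_common_eigenvalue
    {H : Type*} [NormedAddCommGroup H] [InnerProductSpace ℂ H] [FiniteDimensional ℂ H]
    (K1 K2 : Submodule ℂ H) (hperp : K2 = K1ᗮ)
    (U : H →L[ℂ] H) (hU : U ∈ unitary (H →L[ℂ] H))
    (hinv1 : ∀ x ∈ K1, U x ∈ K1) (hinv2 : ∀ x ∈ K2, U x ∈ K2)
    (φ1 φ2 : H) (hφ1 : φ1 ∈ K1) (hφ2 : φ2 ∈ K2)
    (hcyc1 : Submodule.span ℂ {x | ∃ k : ℕ, x = (U ^ k) φ1} = K1)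
    (hcyc2 : Submodule.span ℂ {x | ∃ k : ℕ, x = (U ^ k) φ2} = K2)
    (a b : ℂ) (ha : a ≠ 0) (hb : b ≠ 0) :
    Submodule.span ℂ {x | ∃ k : ℕ, x = (U ^ k) (a • φ1 + b • φ2)} = ⊤ ↔
      {μ : ℂ | ∃ v ∈ K1, v ≠ 0 ∧ U v = μ • v} ∩
        {μ : ℂ | ∃ v ∈ K2, v ≠ 0 ∧ U v = μ • v} = ∅ :=
  directSum_cyclic_iff_no_common_eigenvalue_general K1 K2 hperp U hU φ1 φ2 hcyc1 hcyc2 a b ha hb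
end

section
/- Let n ≥ 1, let γ_0, …, γ_{n−2} lie in the open unit disc, and let γ_{n−1} lie on the unit circle. Then the vector δ_0 = (1, 0, …, 0) ∈ ℂ^n is a cyclic vector for the finite CMV matrix C_n(γ_0, …, γ_{n−1}), i.e., the vectors C_n^k δ_0, k ≥ 0, span ℂ^n. -/
noncomputable def tauc (γ : ℂ) : ℂ := (Real.sqrt (1 - ‖γ‖ ^ 2) : ℝ)

/-- Entries of the semi-infinite CMV factor `L = Θ(γ₀) ⊕ Θ(γ₂) ⊕ ⋯`, where
`Θ(γ)` is the 2×2 matrix with rows `(conj γ, τ)`, `(τ, -γ)` and the block `Θ(γ_{2j})`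
occupies rows and columns `2j, 2j+1`. -/
noncomputable def Lent (γ : ℕ → ℂ) (i j : ℕ) : ℂ :=
  if i % 2 = 0 then
    if j = i then (starRingEnd ℂ) (γ i) else if j = i + 1 then tauc (γ i) else 0
  else
    if j = i - 1 then tauc (γ (i - 1)) else if j = i then -γ (i - 1) else 0

/-- Entries of the semi-infinite CMV factor `M = 1 ⊕ Θ(γ₁) ⊕ Θ(γ₃) ⊕ ⋯`, the block
`Θ(γ_{2j+1})` occupying rows and columns `2j+1, 2j+2`. -/
noncomputable def Ment (γ : ℕ → ℂ) (i j : ℕ) : ℂ :=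
  if i = 0 then (if j = 0 then 1 else 0)
  else if i % 2 = 1 then
    if j = i then (starRingEnd ℂ) (γ i) else if j = i + 1 then tauc (γ i) else 0
  else
    if j = i - 1 then tauc (γ (i - 1)) else if j = i then -γ (i - 1) else 0

/-- The `n × n` finite CMV matrix: the product of the upper-left `n × n` blocks of
`L` and `M`; when `|γ_{n-1}| = 1` this is the upper-left `n × n` block of the
semi-infinite product `L·M`. -/
noncomputable def CMVfin (γ : ℕ → ℂ) (n : ℕ) : Matrix (Fin n) (Fin n) ℂ :=
  (Matrix.of fun i j : Fin n => Lent γ i j) * (Matrix.of fun i j : Fin n => Ment γ i j)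

/-
The finite CMV matrix factors as `C = L M`, where `L` and `M` are block diagonal with the
unitary blocks `Θ(γ_k)` (a trailing `1 × 1` block `conj γ_{n-1}` or `-γ_{n-1}` is unimodular), so
`C` is unitary. The cyclic subspace `V` of `δ₀` is `C`-invariant, hence, in finite dimension,
invariant under `C⁻¹ = Cᴴ`; since `Cᴴ L = Mᴴ` and `C Mᴴ = L`, `V` contains `L w` iff it contains
`Mᴴ w`. Starting from `Mᴴ δ₀ = δ₀`, the vectors `L δ_q` (`q` even) and `Mᴴ δ_q` (`q` odd) are
`a δ_q + τ_q δ_{q+1}` with `τ_q ≠ 0` as long as `|γ_q| < 1`, whereas `L δ_q` (`q` odd) and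
`Mᴴ δ_q` (`q` even) lie in the span of `δ_{q-1}` and `δ_q`. Alternating the two moves climbs
through `δ₀, δ₁, …, δ_{n-1}`.
-/

section
variable {K ι : Type*} [Field K] [Fintype ι] [DecidableEq ι]
open Matrix

lemma Matrix.mulVec_mem_span_pow_mulVec (A : Matrix ι ι K) (v : ι → K) :
    ∀ w ∈ Submodule.span K {x | ∃ k : ℕ, x = (A ^ k) *ᵥ v},
      A *ᵥ w ∈ Submodule.span K {x | ∃ k : ℕ, x = (A ^ k) *ᵥ v} := by
  have hmap : (Submodule.span K {x | ∃ k : ℕ, x = (A ^ k) *ᵥ v}).map A.mulVecLin ≤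
      Submodule.span K {x | ∃ k : ℕ, x = (A ^ k) *ᵥ v} := by
    rw [Submodule.map_span, Submodule.span_le]
    rintro _ ⟨_, ⟨k, rfl⟩, rfl⟩
    exact Submodule.subset_span ⟨k + 1, by rw [mulVecLin_apply, mulVec_mulVec, pow_succ']⟩
  exact fun w hw => hmap ⟨w, hw, rfl⟩

lemma Matrix.mulVec_mem_of_mul_eq_one {A B : Matrix ι ι K} (hBA : B * A = 1)
    {V : Submodule K (ι → K)} (hV : ∀ v ∈ V, A *ᵥ v ∈ V) {v : ι → K} (hv : v ∈ V) :
    B *ᵥ v ∈ V := by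
  let f : V →ₗ[K] V := A.mulVecLin.restrict hV
  have hBA' : ∀ u, B *ᵥ (A *ᵥ u) = u := fun u => by rw [mulVec_mulVec, hBA, one_mulVec]
  have hf : Function.Injective f := fun x y hxy => Subtype.ext <| by
    rw [← hBA' x, ← hBA' y]
    exact congrArg (B *ᵥ ·) (congrArg Subtype.val hxy)
  obtain ⟨w, hw⟩ := LinearMap.injective_iff_surjective.mp hf ⟨v, hv⟩
  have hAw : A *ᵥ w = v := congrArg Subtype.val hw
  rw [← hAw, hBA']
  exact w.2

end

lemma Submodule.mem_of_smul_add_smul_mem {K M : Type*} [Field K] [AddCommGroup M] [Module K M]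
    {V : Submodule K M} {x y : M} {a b : K} (hb : b ≠ 0) (hx : x ∈ V) (h : a • x + b • y ∈ V) :
    y ∈ V :=
  (V.smul_mem_iff hb).mp ((V.add_mem_iff_right (V.smul_mem a hx)).mp h)

namespace CMV

open Matrix ComplexConjugate

structure HasThetaBlock (f : ℕ → ℕ → ℂ) (c : ℂ) (p : ℕ) : Prop where
  col : ∀ i, f i p = if i = p then conj c else if i = p + 1 then tauc c else 0
  col_succ : ∀ i, f i (p + 1) = if i = p then tauc c else if i = p + 1 then -c else 0
  row : ∀ j, f p j = if j = p then conj c else if j = p + 1 then tauc c else 0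
  row_succ : ∀ j, f (p + 1) j = if j = p then tauc c else if j = p + 1 then -c else 0

lemma hasThetaBlock_Lent (γ : ℕ → ℂ) {p : ℕ} (hp : Even p) : HasThetaBlock (Lent γ) (γ p) p := by
  obtain ⟨r, rfl⟩ := hp
  constructor <;> intro i <;> unfold Lent <;> split_ifs <;>
    first | rfl | (exfalso; omega) | (subst_vars; simp)

lemma hasThetaBlock_Ment (γ : ℕ → ℂ) {p : ℕ} (hp : Odd p) : HasThetaBlock (Ment γ) (γ p) p := by
  obtain ⟨r, rfl⟩ := hp
  constructor <;> intro i <;> unfold Ment <;> split_ifs <;>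
    first | rfl | (exfalso; omega) | (subst_vars; simp)

lemma conj_tauc (c : ℂ) : conj (tauc c) = tauc c := by
  simp [tauc]

lemma tauc_sq {c : ℂ} (hc : ‖c‖ ≤ 1) : tauc c ^ 2 = 1 - conj c * c := by
  have hsq : (0 : ℝ) ≤ 1 - ‖c‖ ^ 2 := by nlinarith [norm_nonneg c]
  rw [tauc, Complex.conj_mul', ← Complex.ofReal_pow, Real.sq_sqrt hsq]
  push_cast; ring

lemma tauc_eq_zero {c : ℂ} (hc : ‖c‖ = 1) : tauc c = 0 := by
  simp [tauc, hc]

lemma tauc_ne_zero {c : ℂ} (hc : ‖c‖ < 1) : tauc c ≠ 0 := by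
  have hpos : (0 : ℝ) < 1 - ‖c‖ ^ 2 := by nlinarith [norm_nonneg c]
  simpa [tauc, Real.sqrt_eq_zero'] using hpos

/-- `δ_k` in `ℂ^n`, taken to be `0` when `n ≤ k`, so that block formulas need no case split at
the last index. -/
def delta (n k : ℕ) : Fin n → ℂ := fun i => if (i : ℕ) = k then 1 else 0

def corner (n : ℕ) (f : ℕ → ℕ → ℂ) : Matrix (Fin n) (Fin n) ℂ := of fun i j => f i j

section
variable {n : ℕ}

lemma delta_eq_zero {k : ℕ} (hk : n ≤ k) : delta n k = 0 := by
  funext i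
  simp only [delta, Pi.zero_apply, ite_eq_right_iff]
  omega

lemma delta_eq_single {k : ℕ} (hk : k < n) : delta n k = Pi.single ⟨k, hk⟩ 1 := by
  funext i
  simp [delta, Pi.single_apply, Fin.ext_iff]

lemma ite_eq_smul_delta_add_smul_delta (p : ℕ) (a b : ℂ) :
    (fun i : Fin n => if (i : ℕ) = p then a else if (i : ℕ) = p + 1 then b else 0) =
      a • delta n p + b • delta n (p + 1) := by
  funext i
  simp only [delta, Pi.add_apply, Pi.smul_apply, smul_eq_mul]
  split_ifs <;> first | (exfalso; omega) | simp

lemma corner_mulVec_delta (f : ℕ → ℕ → ℂ) {k : ℕ} (hk : k < n) :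
    corner n f *ᵥ delta n k = fun i : Fin n => f i k := by
  rw [delta_eq_single hk, mulVec_single_one]
  rfl

lemma conjTranspose_corner_mulVec_delta (f : ℕ → ℕ → ℂ) {k : ℕ} (hk : k < n) :
    (corner n f)ᴴ *ᵥ delta n k = fun j : Fin n => conj (f k j) := by
  rw [delta_eq_single hk, mulVec_single_one]
  rfl

end

namespace HasThetaBlock

variable {f : ℕ → ℕ → ℂ} {c : ℂ} {p n : ℕ}

lemma mulVec_delta (h : HasThetaBlock f c p) :
    corner n f *ᵥ delta n p = conj c • delta n p + tauc c • delta n (p + 1) := by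
  rcases lt_or_ge p n with hp | hp
  · rw [corner_mulVec_delta f hp, ← ite_eq_smul_delta_add_smul_delta]
    exact funext fun i => h.col i
  · simp [delta_eq_zero hp, delta_eq_zero (Nat.le_succ_of_le hp)]

lemma mulVec_delta_succ (h : HasThetaBlock f c p) (hp : p + 1 < n) :
    corner n f *ᵥ delta n (p + 1) = tauc c • delta n p - c • delta n (p + 1) := by
  rw [corner_mulVec_delta f hp, sub_eq_add_neg, ← neg_smul, ← ite_eq_smul_delta_add_smul_delta]
  exact funext fun i => h.col_succ i

lemma conjTranspose_mulVec_delta (h : HasThetaBlock f c p) :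
    (corner n f)ᴴ *ᵥ delta n p = c • delta n p + tauc c • delta n (p + 1) := by
  rcases lt_or_ge p n with hp | hp
  · rw [conjTranspose_corner_mulVec_delta f hp, ← ite_eq_smul_delta_add_smul_delta]
    funext j
    simp [h.row j, apply_ite conj, conj_tauc]
  · simp [delta_eq_zero hp, delta_eq_zero (Nat.le_succ_of_le hp)]

lemma conjTranspose_mulVec_delta_succ (h : HasThetaBlock f c p) (hp : p + 1 < n) :
    (corner n f)ᴴ *ᵥ delta n (p + 1) = tauc c • delta n p - conj c • delta n (p + 1) := by
  rw [conjTranspose_corner_mulVec_delta f hp, sub_eq_add_neg, ← neg_smul,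
    ← ite_eq_smul_delta_add_smul_delta]
  funext j
  simp [h.row_succ j, apply_ite conj, conj_tauc]

lemma conjTranspose_mulVec_mulVec_delta (h : HasThetaBlock f c p) (hc : ‖c‖ ≤ 1)
    (hlast : n ≤ p + 1 → ‖c‖ = 1) :
    (corner n f)ᴴ *ᵥ (corner n f *ᵥ delta n p) = delta n p := by
  rw [h.mulVec_delta, mulVec_add, mulVec_smul, mulVec_smul, h.conjTranspose_mulVec_delta]
  rcases lt_or_ge (p + 1) n with hp | hp
  · rw [h.conjTranspose_mulVec_delta_succ hp]
    linear_combination (norm := module) (tauc_sq hc) • delta n p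
  · simp [tauc_eq_zero (hlast hp), smul_smul, Complex.conj_mul', hlast hp]

lemma conjTranspose_mulVec_mulVec_delta_succ (h : HasThetaBlock f c p) (hc : ‖c‖ ≤ 1) :
    (corner n f)ᴴ *ᵥ (corner n f *ᵥ delta n (p + 1)) = delta n (p + 1) := by
  rcases lt_or_ge (p + 1) n with hp | hp
  · rw [h.mulVec_delta_succ hp, mulVec_sub, mulVec_smul, mulVec_smul,
      h.conjTranspose_mulVec_delta, h.conjTranspose_mulVec_delta_succ hp]
    linear_combination (norm := module) (tauc_sq hc) • delta n (p + 1)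
  · simp [delta_eq_zero hp]

end HasThetaBlock

section
variable {n : ℕ} (γ : ℕ → ℂ)

lemma corner_Ment_mulVec_delta_zero : corner n (Ment γ) *ᵥ delta n 0 = delta n 0 := by
  rcases Nat.eq_zero_or_pos n with rfl | hn
  · exact Subsingleton.elim _ _
  rw [corner_mulVec_delta _ hn]
  funext i
  unfold Ment delta
  split_ifs <;> first | rfl | (exfalso; omega)

lemma conjTranspose_corner_Ment_mulVec_delta_zero :
    (corner n (Ment γ))ᴴ *ᵥ delta n 0 = delta n 0 := by
  rcases Nat.eq_zero_or_pos n with rfl | hn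
  · exact Subsingleton.elim _ _
  rw [conjTranspose_corner_mulVec_delta _ hn]
  funext i
  unfold Ment delta
  split_ifs <;> first | (exfalso; omega) | simp

end

lemma mem_unitaryGroup_of_forall_delta {n : ℕ} {A : Matrix (Fin n) (Fin n) ℂ}
    (h : ∀ k < n, Aᴴ *ᵥ (A *ᵥ delta n k) = delta n k) : A ∈ unitaryGroup (Fin n) ℂ := by
  rw [mem_unitaryGroup_iff', star_eq_conjTranspose]
  refine ext_of_mulVec_single fun i => ?_
  rw [← mulVec_mulVec, one_mulVec, ← delta_eq_single i.2]
  exact h i i.2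

section
variable {n : ℕ} {γ : ℕ → ℂ} (hγ : ∀ k < n, ‖γ k‖ ≤ 1) (hlast : ‖γ (n - 1)‖ = 1)
include hγ hlast

lemma corner_Lent_mem_unitaryGroup : corner n (Lent γ) ∈ unitaryGroup (Fin n) ℂ := by
  refine mem_unitaryGroup_of_forall_delta fun k hk => ?_
  obtain ⟨p, rfl | rfl⟩ := k.even_or_odd'
  · refine (hasThetaBlock_Lent γ (even_two_mul p)).conjTranspose_mulVec_mulVec_delta (hγ _ hk)
      fun h => ?_
    rwa [show 2 * p = n - 1 by omega]
  · exact (hasThetaBlock_Lent γ (even_two_mul p)).conjTranspose_mulVec_mulVec_delta_succ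
      (hγ _ (by omega))

lemma corner_Ment_mem_unitaryGroup : corner n (Ment γ) ∈ unitaryGroup (Fin n) ℂ := by
  refine mem_unitaryGroup_of_forall_delta fun k hk => ?_
  rcases k with _ | q
  · rw [corner_Ment_mulVec_delta_zero, conjTranspose_corner_Ment_mulVec_delta_zero]
  obtain ⟨p, rfl | rfl⟩ := q.even_or_odd'
  · refine (hasThetaBlock_Ment γ (odd_two_mul_add_one p)).conjTranspose_mulVec_mulVec_delta
      (hγ _ hk) fun h => ?_
    rwa [show 2 * p + 1 = n - 1 by omega]
  · exact (hasThetaBlock_Ment γ (odd_two_mul_add_one p)).conjTranspose_mulVec_mulVec_delta_succ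
      (hγ _ (by omega))

lemma CMVfin_mem_unitaryGroup : CMVfin γ n ∈ unitaryGroup (Fin n) ℂ :=
  Submonoid.mul_mem _ (corner_Lent_mem_unitaryGroup hγ hlast)
    (corner_Ment_mem_unitaryGroup hγ hlast)

end

lemma forall_norm_le_one {n : ℕ} {γ : ℕ → ℂ} (hγ : ∀ k < n - 1, ‖γ k‖ < 1)
    (hlast : ‖γ (n - 1)‖ = 1) : ∀ k < n, ‖γ k‖ ≤ 1 := by
  intro k hk
  rcases lt_or_ge k (n - 1) with h | h
  · exact (hγ k h).le
  · rw [show k = n - 1 by omega, hlast]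

lemma delta_mem_of_forall {n : ℕ} {γ : ℕ → ℂ} (hγ : ∀ k < n - 1, ‖γ k‖ < 1)
    {V : Submodule ℂ (Fin n → ℂ)} (h0 : delta n 0 ∈ V)
    (hL : ∀ w, corner n (Lent γ) *ᵥ w ∈ V → (corner n (Ment γ))ᴴ *ᵥ w ∈ V)
    (hM : ∀ w, (corner n (Ment γ))ᴴ *ᵥ w ∈ V → corner n (Lent γ) *ᵥ w ∈ V) :
    ∀ q, delta n q ∈ V ∧ delta n (q + 1) ∈ V := by
  have hnext : ∀ q (a : ℂ), a • delta n q + tauc (γ q) • delta n (q + 1) ∈ V → delta n q ∈ V →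
      delta n (q + 1) ∈ V := by
    intro q a h hq
    rcases le_or_gt n (q + 1) with hqn | hqn
    · simp [delta_eq_zero hqn]
    · exact Submodule.mem_of_smul_add_smul_mem (tauc_ne_zero (hγ q (by omega))) hq h
  intro q
  induction q with
  | zero =>
    refine ⟨h0, hnext 0 (conj (γ 0)) ?_ h0⟩
    rw [← (hasThetaBlock_Lent γ Even.zero).mulVec_delta]
    exact hM _ (by rwa [conjTranspose_corner_Ment_mulVec_delta_zero])
  | succ q ih =>
    refine ⟨ih.2, ?_⟩
    rcases le_or_gt n (q + 1) with hqn | hqn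
    · simp [delta_eq_zero (by omega : n ≤ q + 1 + 1)]
    have hpair (a b : ℂ) : a • delta n q - b • delta n (q + 1) ∈ V :=
      V.sub_mem (V.smul_mem a ih.1) (V.smul_mem b ih.2)
    rcases q.even_or_odd with hq | hq
    · have hL' := (hasThetaBlock_Lent γ hq).mulVec_delta_succ hqn
      have hM' := (hasThetaBlock_Ment γ hq.add_one).conjTranspose_mulVec_delta (n := n)
      exact hnext _ (γ (q + 1)) (hM' ▸ hL _ (hL' ▸ hpair _ _)) ih.2
    · have hM' := (hasThetaBlock_Ment γ hq).conjTranspose_mulVec_delta_succ hqn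
      have hL' := (hasThetaBlock_Lent γ hq.add_one).mulVec_delta (n := n)
      exact hnext _ (conj (γ (q + 1))) (hL' ▸ hM _ (hM' ▸ hpair _ _)) ih.2

lemma eq_top_of_invariant {n : ℕ} {γ : ℕ → ℂ} (hγ : ∀ k < n - 1, ‖γ k‖ < 1)
    (hlast : ‖γ (n - 1)‖ = 1) {V : Submodule ℂ (Fin n → ℂ)} (h0 : delta n 0 ∈ V)
    (hC : ∀ v ∈ V, CMVfin γ n *ᵥ v ∈ V) (hCH : ∀ v ∈ V, (CMVfin γ n)ᴴ *ᵥ v ∈ V) : V = ⊤ := by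
  have hγ' := forall_norm_le_one hγ hlast
  have hLM : CMVfin γ n = corner n (Lent γ) * corner n (Ment γ) := rfl
  have hLL := Unitary.star_mul_self_of_mem (corner_Lent_mem_unitaryGroup hγ' hlast)
  have hMM := Unitary.mul_star_self_of_mem (corner_Ment_mem_unitaryGroup hγ' hlast)
  rw [star_eq_conjTranspose] at hLL hMM
  have key := delta_mem_of_forall hγ h0
    (fun w hw => by
      simpa [hLM, conjTranspose_mul, mulVec_mulVec, Matrix.mul_assoc, hLL] using hCH _ hw)
    (fun w hw => by simpa [hLM, mulVec_mulVec, Matrix.mul_assoc, hMM] using hC _ hw)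
  refine Submodule.eq_top_iff'.mpr fun v => ?_
  rw [pi_eq_sum_univ v]
  refine V.sum_mem fun i _ => V.smul_mem _ ?_
  convert (key i).1 using 1
  funext j
  simp [delta, Fin.ext_iff, eq_comm]

end CMV

/-- **Proposition 3.1**, finite case. If `γ_0, …, γ_{n-2} ∈ 𝔻` and `γ_{n-1} ∈ ∂𝔻`,
then `δ₀` is a cyclic vector for the finite CMV matrix `C_n(γ_0, …, γ_{n-1})`. -/
theorem cmvFin_delta0_cyclic
    (n : ℕ) (hn : 1 ≤ n) (γ : ℕ → ℂ)
    (hγ : ∀ k < n - 1, ‖γ k‖ < 1)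
    (hlast : ‖γ (n - 1)‖ = 1) :
    Submodule.span ℂ {x : Fin n → ℂ | ∃ k : ℕ,
      x = ((CMVfin γ n) ^ k).mulVec (Pi.single (⟨0, hn⟩ : Fin n) 1)} = ⊤ := by
  have hU := CMV.CMVfin_mem_unitaryGroup (CMV.forall_norm_le_one hγ hlast) hlast
  have hinv := Matrix.mulVec_mem_span_pow_mulVec (CMVfin γ n) (Pi.single (⟨0, hn⟩ : Fin n) 1)
  refine CMV.eq_top_of_invariant hγ hlast ?_ hinv
    fun v hv => Matrix.mulVec_mem_of_mul_eq_one (Unitary.star_mul_self_of_mem hU) hinv hv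
  exact Submodule.subset_span ⟨0, by rw [pow_zero, Matrix.one_mulVec, CMV.delta_eq_single hn]⟩
end

section
/- Let n ≥ 1, let γ_0, …, γ_{n−2} lie in the open unit disc, and let γ_{n−1} lie on the unit circle. Then the vector δ_{n−1} = (0, …, 0, 1) ∈ ℂ^n is a cyclic vector for the finite CMV matrix C_n(γ_0, …, γ_{n−1}), i.e., the vectors C_n^k δ_{n−1}, k ≥ 0, span ℂ^n. -/
/-!
`C = L M` is unitary: `L = Θ(γ₀) ⊕ Θ(γ₂) ⊕ ⋯` and `M = (1) ⊕ Θ(γ₁) ⊕ Θ(γ₃) ⊕ ⋯` are direct sums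
of unitary blocks, and the block cut off by the truncation is the unimodular scalar
`conj γ_{n-1}` or `-γ_{n-1}`. Hence the cyclic subspace of `δ_{n-1}`, which is `C`-invariant, is
also invariant under `C⁻¹ = Cᴴ`. The matrix `C` is pentadiagonal with `C_{j,j+2} = τ_j τ_{j+1}` for
even `j` and `C_{j+2,j} = τ_{j+1} τ_j` for odd `j`, nonzero as `|γ_j| < 1`. Applying `C` or `Cᴴ`
according to the parity of `j`, one descends from `δ_{n-1}` to a vector of the cyclic subspace
whose first nonzero entry sits at `j`, for every `j` (the first step uses `γ_{n-1} ≠ 0`). These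
vectors form a triangular basis.
-/

open Matrix Finset ComplexConjugate

section LinearAlgebra

variable {K ι : Type*} [Field K] [Fintype ι] [DecidableEq ι]

def krylovSpace (A : Matrix ι ι K) (v : ι → K) : Submodule K (ι → K) :=
  Submodule.span K {x | ∃ k : ℕ, x = (A ^ k) *ᵥ v}

variable {A : Matrix ι ι K} {v x : ι → K}

lemma self_mem_krylovSpace : v ∈ krylovSpace A v :=
  Submodule.subset_span ⟨0, by rw [pow_zero, one_mulVec]⟩

lemma map_krylovSpace_le : (krylovSpace A v).map A.mulVecLin ≤ krylovSpace A v := by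
  rw [krylovSpace, Submodule.map_span, Submodule.span_le]
  rintro _ ⟨_, ⟨k, rfl⟩, rfl⟩
  exact Submodule.subset_span ⟨k + 1, by rw [mulVecLin_apply, mulVec_mulVec, pow_succ']⟩

lemma mulVec_mem_krylovSpace (hx : x ∈ krylovSpace A v) : A *ᵥ x ∈ krylovSpace A v :=
  map_krylovSpace_le (Submodule.mem_map_of_mem hx)

/-- `A` is injective, so it maps the finite-dimensional space `krylovSpace A v` onto itself. -/
lemma mulVec_mem_krylovSpace_of_mul_eq_one {B : Matrix ι ι K} (hBA : B * A = 1)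
    (hx : x ∈ krylovSpace A v) : B *ᵥ x ∈ krylovSpace A v := by
  have hinj : Function.Injective A.mulVecLin := fun y z h => by
    simpa [mulVec_mulVec, hBA] using congrArg (B *ᵥ ·) h
  have hmap : (krylovSpace A v).map A.mulVecLin = krylovSpace A v :=
    Submodule.eq_of_le_of_finrank_le map_krylovSpace_le
      (Submodule.equivMapOfInjective _ hinj _).finrank_eq.le
  rw [← hmap] at hx
  obtain ⟨y, hy, rfl⟩ := hx
  rwa [mulVecLin_apply, mulVec_mulVec, hBA, one_mulVec]

end LinearAlgebra

section FirstNonzero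

variable {K ι : Type*}

def FirstNonzeroAt [Zero K] [LT ι] (v : ι → K) (j : ι) : Prop :=
  v j ≠ 0 ∧ ∀ i < j, v i = 0

/-- The vectors `v j` form a lower triangular matrix with nonzero diagonal. -/
lemma Submodule.eq_top_of_forall_exists_firstNonzeroAt [Field K] [Fintype ι] [DecidableEq ι]
    [LinearOrder ι] {S : Submodule K (ι → K)} (h : ∀ j, ∃ v ∈ S, FirstNonzeroAt v j) : S = ⊤ := by
  choose v hvS hv using h
  let V : Matrix ι ι K := Matrix.of fun i j => v j i
  have hV : IsUnit V := by
    rw [isUnit_iff_isUnit_det, det_of_isLowerTriangular V fun i j hij => (hv j).2 i hij]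
    exact isUnit_iff_ne_zero.2 (Finset.prod_ne_zero_iff.2 fun j _ => (hv j).1)
  refine eq_top_iff.2 fun x _ => ?_
  obtain ⟨y, rfl⟩ := mulVec_surjective_iff_isUnit.2 hV x
  have hVy : V *ᵥ y = ∑ j, y j • v j := by
    ext i; simp [V, mulVec, dotProduct, Finset.sum_apply, mul_comm]
  rw [hVy]
  exact Submodule.sum_mem _ fun j _ => Submodule.smul_mem _ _ (hvS j)

lemma FirstNonzeroAt.mulVec [Semiring K] [NoZeroDivisors K] {n w : ℕ} {B : Matrix (Fin n) (Fin n) K}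
    {v : Fin n → K} {c j : Fin n} (hv : FirstNonzeroAt v c) (hjc : (j : ℕ) + w = c)
    (hB : ∀ i k : Fin n, c ≤ k → (i : ℕ) + w < k → B i k = 0) (hBjc : B j c ≠ 0) :
    FirstNonzeroAt (B *ᵥ v) j := by
  have key : ∀ i : Fin n, (i : ℕ) + w ≤ c → (B *ᵥ v) i = B i c * v c := fun i hi => by
    refine Finset.sum_eq_single c (fun k _ hkc => ?_) (fun h => absurd (Finset.mem_univ c) h)
    rcases lt_or_gt_of_ne hkc with hk | hk
    · exact mul_eq_zero_of_right _ (hv.2 k hk)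
    · exact mul_eq_zero_of_left (hB i k hk.le (by omega)) _
  refine ⟨by rw [key j hjc.le]; exact mul_ne_zero hBjc hv.1, fun i hi => ?_⟩
  have hi' : (i : ℕ) + w < c := by omega
  rw [key i hi'.le, hB i c le_rfl hi', zero_mul]

end FirstNonzero

lemma conj_tauc (γ : ℂ) : conj (tauc γ) = tauc γ := Complex.conj_ofReal _

lemma tauc_ne_zero {γ : ℂ} (h : ‖γ‖ < 1) : tauc γ ≠ 0 := by
  have : (0 : ℝ) < 1 - ‖γ‖ ^ 2 := by nlinarith [norm_nonneg γ]
  simpa [tauc] using (Real.sqrt_pos.2 this).ne'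

lemma tauc_mul_tauc {γ : ℂ} (h : ‖γ‖ ≤ 1) : tauc γ * tauc γ = 1 - conj γ * γ := by
  have : (0 : ℝ) ≤ 1 - ‖γ‖ ^ 2 := by nlinarith [norm_nonneg γ]
  rw [tauc, ← Complex.ofReal_mul, Real.mul_self_sqrt this, Complex.conj_mul']
  push_cast; ring

lemma Lent_eq_zero_of_div_two_ne {γ : ℕ → ℂ} {i k : ℕ} (h : i / 2 ≠ k / 2) : Lent γ i k = 0 := by
  unfold Lent; split_ifs <;> first | rfl | omega

lemma Ment_eq_zero_of_succ_div_two_ne {γ : ℕ → ℂ} {i k : ℕ} (h : (i + 1) / 2 ≠ (k + 1) / 2) :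
    Ment γ i k = 0 := by
  unfold Ment; split_ifs <;> first | rfl | omega

lemma Lent_add_two (γ : ℕ → ℂ) (i k : ℕ) :
    Lent γ (i + 2) (k + 2) = Lent (fun m => γ (m + 2)) i k := by
  unfold Lent
  split_ifs <;> first | rfl | contradiction | omega | (congr 2; omega)

lemma Ment_succ_succ (γ : ℕ → ℂ) (i k : ℕ) :
    Ment γ (i + 1) (k + 1) = Lent (fun m => γ (m + 1)) i k := by
  unfold Ment Lent
  split_ifs <;> first | rfl | contradiction | omega | (congr 2; omega)

lemma sum_range_two_Lent_mul_conj (γ : ℕ → ℂ) (hγ : ‖γ 0‖ ≤ 1) {i j : ℕ} (hi : i < 2) (hj : j < 2) :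
    ∑ k ∈ range 2, Lent γ i k * conj (Lent γ j k) = if i = j then 1 else 0 := by
  interval_cases i <;> interval_cases j <;>
    simp [Finset.sum_range_succ, Lent, conj_tauc] <;>
    first | linear_combination tauc_mul_tauc hγ | ring

/-- `L_{n+2}(γ) = Θ(γ₀) ⊕ L_n(γ₂, γ₃, …)`. -/
lemma sum_Lent_mul_conj : ∀ (n : ℕ) (γ : ℕ → ℂ), (∀ k < n, ‖γ k‖ ≤ 1) →
    (∀ k, k + 1 = n → ‖γ k‖ = 1) → ∀ i < n, ∀ j < n,
      ∑ k ∈ range n, Lent γ i k * conj (Lent γ j k) = if i = j then 1 else 0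
  | 0, _, _, _, i, hi, _, _ => absurd hi (Nat.not_lt_zero i)
  | 1, γ, _, hlast, i, hi, j, hj => by
    obtain rfl : i = 0 := by omega
    obtain rfl : j = 0 := by omega
    simp [Lent, Complex.conj_mul', hlast 0 rfl]
  | n + 2, γ, hγ, hlast, i, hi, j, hj => by
    rw [add_comm n 2, Finset.sum_range_add]
    have hL : ∀ a b : ℕ, a < 2 → 2 ≤ b → Lent γ a b = 0 ∧ Lent γ b a = 0 := fun a b ha hb =>
      ⟨Lent_eq_zero_of_div_two_ne (by omega), Lent_eq_zero_of_div_two_ne (by omega)⟩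
    rcases lt_or_ge i 2 with hi2 | hi2 <;> rcases lt_or_ge j 2 with hj2 | hj2
    · rw [sum_range_two_Lent_mul_conj γ (hγ 0 (by omega)) hi2 hj2, Finset.sum_eq_zero, add_zero]
      intro k _
      rw [(hL i (2 + k) hi2 (by omega)).1, zero_mul]
    · rw [Finset.sum_eq_zero, Finset.sum_eq_zero, if_neg (by omega), add_zero] <;> intro k hk
      · rw [(hL i (2 + k) hi2 (by omega)).1, zero_mul]
      · rw [(hL k j (by simpa using hk) hj2).2, map_zero, mul_zero]
    · rw [Finset.sum_eq_zero, Finset.sum_eq_zero, if_neg (by omega), add_zero] <;> intro k hk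
      · rw [(hL j (2 + k) hj2 (by omega)).1, map_zero, mul_zero]
      · rw [(hL k i (by simpa using hk) hi2).2, zero_mul]
    · obtain ⟨i, rfl⟩ := Nat.exists_eq_add_of_le' hi2
      obtain ⟨j, rfl⟩ := Nat.exists_eq_add_of_le' hj2
      rw [Finset.sum_eq_zero fun k hk => by rw [(hL k (i + 2) (by simpa using hk) hi2).2, zero_mul],
        zero_add]
      simp only [add_comm 2, Lent_add_two, add_left_inj]
      exact sum_Lent_mul_conj n _ (fun k hk => hγ _ (by omega)) (fun k hk => hlast _ (by omega))
        i (by omega) j (by omega)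

/-- `M_{n+1}(γ) = (1) ⊕ L_n(γ₁, γ₂, …)`. -/
lemma sum_Ment_mul_conj (n : ℕ) (γ : ℕ → ℂ) (hγ : ∀ k < n, ‖γ k‖ ≤ 1)
    (hlast : ∀ k, k + 1 = n → ‖γ k‖ = 1) {i j : ℕ} (hi : i < n) (hj : j < n) :
    ∑ k ∈ range n, Ment γ i k * conj (Ment γ j k) = if i = j then 1 else 0 := by
  obtain ⟨n, rfl⟩ := Nat.exists_eq_add_of_lt (Nat.zero_lt_of_lt hi)
  rw [zero_add, Finset.sum_range_succ']
  have hM0 : ∀ a : ℕ, Ment γ (a + 1) 0 = 0 ∧ Ment γ 0 (a + 1) = 0 := fun a =>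
    ⟨Ment_eq_zero_of_succ_div_two_ne (by omega), Ment_eq_zero_of_succ_div_two_ne (by omega)⟩
  rcases i with _ | i <;> rcases j with _ | j
  · simp [Ment]
  · simp [hM0]
  · simp [hM0]
  · simp only [Ment_succ_succ, (hM0 i).1, zero_mul, add_zero, add_left_inj]
    exact sum_Lent_mul_conj n _ (fun k hk => hγ _ (by omega)) (fun k hk => hlast _ (by omega))
      i (by omega) j (by omega)

lemma of_mul_conjTranspose_eq_one {n : ℕ} (a : ℕ → ℕ → ℂ)
    (h : ∀ i < n, ∀ j < n, ∑ k ∈ range n, a i k * conj (a j k) = if i = j then 1 else 0) :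
    (of fun i j : Fin n => a i j) * (of fun i j : Fin n => a i j)ᴴ = 1 := by
  ext i j
  simp only [mul_apply, conjTranspose_apply, of_apply, one_apply, Fin.ext_iff, Complex.star_def]
  exact (Fin.sum_univ_eq_sum_range (fun k => a i k * conj (a j k)) n).trans (h i i.2 j j.2)

lemma CMVfin_conjTranspose_mul_self {n : ℕ} {γ : ℕ → ℂ} (hγ : ∀ k < n, ‖γ k‖ ≤ 1)
    (hlast : ∀ k, k + 1 = n → ‖γ k‖ = 1) : (CMVfin γ n)ᴴ * CMVfin γ n = 1 := by
  have hL := mul_eq_one_comm.1 <| of_mul_conjTranspose_eq_one (n := n) (Lent γ) fun i hi j hj =>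
    sum_Lent_mul_conj n γ hγ hlast i hi j hj
  have hM := mul_eq_one_comm.1 <| of_mul_conjTranspose_eq_one (n := n) (Ment γ) fun i hi j hj =>
    sum_Ment_mul_conj n γ hγ hlast hi hj
  rw [CMVfin, conjTranspose_mul, Matrix.mul_assoc, ← Matrix.mul_assoc _ _ (of _), hL,
    Matrix.one_mul, hM]

section Entries

variable {n : ℕ} {γ : ℕ → ℂ}

lemma CMVfin_apply (i k : Fin n) : CMVfin γ n i k = ∑ m : Fin n, Lent γ i m * Ment γ m k := rfl

/-- `L` has the diagonal blocks `{2b, 2b+1}` and `M` the blocks `{2b-1, 2b}`. -/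
lemma CMVfin_apply_eq_zero {i k : Fin n}
    (h : ∀ m : ℕ, (i : ℕ) / 2 = m / 2 → (m + 1) / 2 = ((k : ℕ) + 1) / 2 → False) :
    CMVfin γ n i k = 0 := by
  rw [CMVfin_apply]
  refine Finset.sum_eq_zero fun m _ => ?_
  by_cases him : (i : ℕ) / 2 = m / 2
  · exact mul_eq_zero_of_right _ (Ment_eq_zero_of_succ_div_two_ne fun hmk => h m him hmk)
  · exact mul_eq_zero_of_left (Lent_eq_zero_of_div_two_ne him) _

lemma CMVfin_apply_eq_mul {i k : Fin n} (a : Fin n)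
    (h : ∀ m : Fin n, (i : ℕ) / 2 = m / 2 → ((m : ℕ) + 1) / 2 = ((k : ℕ) + 1) / 2 → m = a) :
    CMVfin γ n i k = Lent γ i a * Ment γ a k := by
  rw [CMVfin_apply]
  refine Finset.sum_eq_single a (fun m _ hma => ?_) (fun ha => absurd (Finset.mem_univ a) ha)
  by_cases him : (i : ℕ) / 2 = m / 2
  · exact mul_eq_zero_of_right _ (Ment_eq_zero_of_succ_div_two_ne fun hmk => hma (h m him hmk))
  · exact mul_eq_zero_of_left (Lent_eq_zero_of_div_two_ne him) _

variable {j c : Fin n}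

lemma CMVfin_apply_of_even_add_two (hj : (j : ℕ) % 2 = 0) (hc : (c : ℕ) = j + 2) :
    CMVfin γ n j c = tauc (γ j) * tauc (γ (j + 1)) := by
  rw [CMVfin_apply_eq_mul ⟨j + 1, by omega⟩ fun m h1 h2 => Fin.ext (by simp only; omega)]
  simp [Lent, Ment, hj, hc, Nat.add_mod]

lemma CMVfin_apply_of_odd_add_two (hj : (j : ℕ) % 2 = 1) (hc : (c : ℕ) = j + 2) :
    CMVfin γ n c j = tauc (γ (j + 1)) * tauc (γ j) := by
  rw [CMVfin_apply_eq_mul ⟨j + 1, by omega⟩ fun m h1 h2 => Fin.ext (by simp only; omega)]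
  simp [Lent, Ment, hj, hc, Nat.add_mod]

lemma CMVfin_apply_of_even_add_one (hj : (j : ℕ) % 2 = 0) (hc : (c : ℕ) = j + 1) :
    CMVfin γ n j c = tauc (γ j) * conj (γ (j + 1)) := by
  rw [CMVfin_apply_eq_mul c fun m h1 h2 => Fin.ext (by omega)]
  simp [Lent, Ment, hj, hc, Nat.add_mod]

lemma CMVfin_apply_of_odd_add_one (hj : (j : ℕ) % 2 = 1) (hc : (c : ℕ) = j + 1) :
    CMVfin γ n c j = conj (γ (j + 1)) * tauc (γ j) := by
  rw [CMVfin_apply_eq_mul c fun m h1 h2 => Fin.ext (by omega)]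
  simp [Lent, Ment, hj, hc, Nat.add_mod]

end Entries

lemma firstNonzeroAt_single {n : ℕ} (e : Fin n) : FirstNonzeroAt (Pi.single e (1 : ℂ)) e :=
  ⟨by simp, fun i hi => Pi.single_eq_of_ne hi.ne _⟩

theorem exists_mem_krylovSpace_CMVfin_firstNonzeroAt {n : ℕ} {γ : ℕ → ℂ} (e : Fin n)
    (he : (e : ℕ) + 1 = n) (hγ : ∀ k < (e : ℕ), ‖γ k‖ < 1) (he0 : γ e ≠ 0)
    (hU : (CMVfin γ n)ᴴ * CMVfin γ n = 1) :
    ∀ (d : ℕ) (j : Fin n), (j : ℕ) + d = e →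
      ∃ v ∈ krylovSpace (CMVfin γ n) (Pi.single e 1), FirstNonzeroAt v j
  | 0, j, hj => by
    rw [Fin.ext (by omega : (j : ℕ) = e)]
    exact ⟨_, self_mem_krylovSpace, firstNonzeroAt_single e⟩
  | 1, j, hj => by
    have hτ : tauc (γ j) ≠ 0 := tauc_ne_zero (hγ j (by omega))
    rcases Nat.mod_two_eq_zero_or_one j with hpar | hpar
    · refine ⟨_, mulVec_mem_krylovSpace self_mem_krylovSpace,
        (firstNonzeroAt_single e).mulVec hj (fun i k hk hik => CMVfin_apply_eq_zero ?_) ?_⟩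
      · intro m; omega
      · rw [CMVfin_apply_of_even_add_one hpar hj.symm]
        exact mul_ne_zero hτ ((map_ne_zero _).2 (by rwa [← hj] at he0))
    · refine ⟨_, mulVec_mem_krylovSpace_of_mul_eq_one hU self_mem_krylovSpace,
        (firstNonzeroAt_single e).mulVec hj (fun i k hk hik => ?_) ?_⟩
      · rw [conjTranspose_apply, CMVfin_apply_eq_zero (fun m => by omega), star_zero]
      · rw [conjTranspose_apply, CMVfin_apply_of_odd_add_one hpar hj.symm]
        exact star_ne_zero.2 (mul_ne_zero ((map_ne_zero _).2 (by rwa [← hj] at he0)) hτ)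
  | d + 2, j, hj => by
    obtain ⟨v, hvS, hv⟩ := exists_mem_krylovSpace_CMVfin_firstNonzeroAt e he hγ he0 hU d
      ⟨j + 2, by omega⟩ (by simp only; omega)
    have hτ : tauc (γ j) * tauc (γ (j + 1)) ≠ 0 :=
      mul_ne_zero (tauc_ne_zero (hγ j (by omega))) (tauc_ne_zero (hγ (j + 1) (by omega)))
    rcases Nat.mod_two_eq_zero_or_one j with hpar | hpar
    · refine ⟨_, mulVec_mem_krylovSpace hvS,
        hv.mulVec rfl (fun i k hk hik => CMVfin_apply_eq_zero ?_) ?_⟩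
      · intro m; omega
      · rwa [CMVfin_apply_of_even_add_two hpar rfl]
    · refine ⟨_, mulVec_mem_krylovSpace_of_mul_eq_one hU hvS,
        hv.mulVec rfl (fun i k hk hik => ?_) ?_⟩
      · rw [conjTranspose_apply, CMVfin_apply_eq_zero (fun m => by omega), star_zero]
      · rw [conjTranspose_apply, CMVfin_apply_of_odd_add_two hpar rfl, mul_comm]
        exact star_ne_zero.2 hτ

/-- (Used in the proof of **Theorem 1.3**.) If `γ_0, …, γ_{n-2} ∈ 𝔻` and
`γ_{n-1} ∈ ∂𝔻`, then `δ_{n-1}` is a cyclic vector for the finite CMV matrix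
`C_n(γ_0, …, γ_{n-1})`. -/
theorem cmvFin_deltaLast_cyclic
    (n : ℕ) (hn : 1 ≤ n) (γ : ℕ → ℂ)
    (hγ : ∀ k < n - 1, ‖γ k‖ < 1)
    (hlast : ‖γ (n - 1)‖ = 1) :
    Submodule.span ℂ {x : Fin n → ℂ | ∃ k : ℕ,
      x = ((CMVfin γ n) ^ k).mulVec
        (Pi.single (⟨n - 1, Nat.sub_lt hn Nat.one_pos⟩ : Fin n) 1)} = ⊤ := by
  have hU : (CMVfin γ n)ᴴ * CMVfin γ n = 1 := by
    refine CMVfin_conjTranspose_mul_self (fun k hk => ?_) fun k hk => by rwa [← hk] at hlast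
    rcases lt_or_eq_of_le (Nat.le_sub_one_of_lt hk) with hk' | rfl
    exacts [(hγ k hk').le, hlast.le]
  have hγ0 : γ (n - 1) ≠ 0 := norm_ne_zero_iff.1 (by rw [hlast]; exact one_ne_zero)
  exact Submodule.eq_top_of_forall_exists_firstNonzeroAt fun j =>
    exists_mem_krylovSpace_CMVfin_firstNonzeroAt _ (Nat.sub_add_cancel hn) hγ hγ0 hU
      (n - 1 - j) j (by simp only; omega)
end

section
/- Let (α_k)_{k≥0} be a sequence in the open unit disc, let Φ_k be the monic polynomials of the Szegő recursion, let (β_k)_{k≥1} be a sequence on the unit circle, and set Φ̃_k(z) = Φ_k(z; β_k). Let m > n ≥ 1. Then for any two distinct zeros z0, z1 of Φ̃_n, the open arc (z0, z1) contains at least one zero of Φ̃_m. -/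
/-!
On the unit circle `ζ = e^{iθ}` one has `ζ Φ_k(ζ) = e^{i η_k(θ)} Φ_k^*(ζ)` with `Φ_k^*(ζ) ≠ 0`,
where the phase `η_k` is continuous, strictly increasing and satisfies
`η_{k+1}(θ) = θ + h_{α_k}(η_k(θ))`; here `h_a` is a strictly increasing lift of a Blaschke
factor, so `h_a(x + 2π) = h_a(x) + 2π`. The zeros of `Φ_{k+1}(·; β)` all lie on the circle
(off it, `|ζ Φ_k(ζ)|` and `|Φ_k^*(ζ)|` differ) and are the solutions of `e^{i η_k(θ)} = conj β`.
Two distinct zeros `θ₀ < θ₁ < θ₀ + 2π` of `Φ̃_n` therefore satisfy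
`η_{n-1}(θ₁) ≥ η_{n-1}(θ₀) + 2π`; each further step of the recursion adds `θ₁ - θ₀ > 0` to this
gap, so for `m > n` the phase `η_{m-1}` increases by more than `2π` on `(θ₀, θ₁)` and, by the
intermediate value theorem, meets `arg (conj β_m)` modulo `2π` there.
-/

open Polynomial

open Polynomial in
/-- The monic OPUC from the Szegő recursion with Verblunsky coefficients `α`:
`Φ_0 = 1`, `Φ_{n+1}(z) = z Φ_n(z) - conj(α_n) Φ_n^*(z)`, where
`Φ_n^*(z) = zⁿ conj(Φ_n(1/conj z))` is the reversed polynomial. -/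
noncomputable def szego (α : ℕ → ℂ) : ℕ → Polynomial ℂ
  | 0 => 1
  | n + 1 => X * szego α n -
      Polynomial.C ((starRingEnd ℂ) (α n)) *
        Polynomial.reflect n ((szego α n).map (starRingEnd ℂ))

open Polynomial in
/-- The paraorthogonal polynomial `Φ_{n+1}(z;β) = z Φ_n(z) - conj(β) Φ_n^*(z)`. -/
noncomputable def popuc (α : ℕ → ℂ) (β : ℂ) (n : ℕ) : Polynomial ℂ :=
  X * szego α n -
    Polynomial.C ((starRingEnd ℂ) β) *
      Polynomial.reflect n ((szego α n).map (starRingEnd ℂ))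

open Complex ComplexConjugate

noncomputable def szegoRev (α : ℕ → ℂ) (k : ℕ) : ℂ[X] :=
  ((szego α k).map (starRingEnd ℂ)).reflect k

theorem reflect_succ_X_mul {R : Type*} [Semiring R] {q : R[X]} {k : ℕ} (h : q.natDegree ≤ k) :
    (X * q).reflect (k + 1) = q.reflect k := by
  rw [add_comm, reflect_mul _ _ natDegree_X_le h, reflect_one_X, one_mul]

theorem map_conj_map_conj {R : Type*} [CommSemiring R] [StarRing R] (p : R[X]) :
    (p.map conj).map conj = p := by
  ext; simp

theorem norm_sub_conj_mul_lt_norm_sub_mul {a w v : ℂ} (ha : ‖a‖ < 1) (h : ‖w‖ < ‖v‖) :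
    ‖w - conj a * v‖ < ‖v - a * w‖ := by
  have key : normSq (v - a * w) - normSq (w - conj a * v) =
      (1 - normSq a) * (normSq v - normSq w) := by
    simp only [normSq_apply, sub_re, sub_im, mul_re, mul_im, conj_re, conj_im]
    ring
  have ha' : normSq a < 1 := by rw [← Complex.sq_norm]; nlinarith [norm_nonneg a]
  have h' : normSq w < normSq v := by
    rw [← Complex.sq_norm, ← Complex.sq_norm]; nlinarith [norm_nonneg w]
  refine lt_of_pow_lt_pow_left₀ 2 (norm_nonneg _) ?_
  rw [Complex.sq_norm, Complex.sq_norm]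
  nlinarith

section Szego

variable (α : ℕ → ℂ)

theorem natDegree_szego_le (k : ℕ) : (szego α k).natDegree ≤ k := by
  induction k with
  | zero => simp [szego]
  | succ k ih =>
    have hrev : (((szego α k).map conj).reflect k).natDegree ≤ k :=
      natDegree_reflect_le.trans (max_le le_rfl (natDegree_map_le.trans ih))
    rw [szego, ← max_self (k + 1)]
    refine natDegree_sub_le_of_le ?_ ?_
    · exact natDegree_mul_le.trans (by rw [natDegree_X]; omega)
    · exact natDegree_C_mul_le _ _ |>.trans (hrev.trans k.le_succ)

theorem szegoRev_succ (k : ℕ) :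
    szegoRev α (k + 1) = szegoRev α k - C (α k) * (X * szego α k) := by
  have hdeg := natDegree_szego_le α k
  have hmap : (szego α (k + 1)).map conj =
      X * (szego α k).map conj - C (α k) * (szego α k).reflect k := by
    rw [szego, Polynomial.map_sub, Polynomial.map_mul, Polynomial.map_X, Polynomial.map_mul,
      Polynomial.map_C, conj_conj, ← reflect_map, map_conj_map_conj]
  rw [szegoRev, hmap, reflect_sub, reflect_C_mul,
    reflect_succ_X_mul (natDegree_map_le.trans hdeg), ← reflect_succ_X_mul hdeg, reflect_reflect,
    szegoRev]

theorem eval_szego_succ (k : ℕ) (z : ℂ) :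
    (szego α (k + 1)).eval z = z * (szego α k).eval z - conj (α k) * (szegoRev α k).eval z := by
  simp [szego, szegoRev]

theorem eval_szegoRev_succ (k : ℕ) (z : ℂ) :
    (szegoRev α (k + 1)).eval z = (szegoRev α k).eval z - α k * (z * (szego α k).eval z) := by
  simp [szegoRev_succ]

theorem eval_popuc (B : ℂ) (k : ℕ) (z : ℂ) :
    (popuc α B k).eval z = z * (szego α k).eval z - conj B * (szegoRev α k).eval z := by
  simp [popuc, szegoRev]

variable {α}

theorem norm_mul_eval_szego_lt_of_norm_lt_one (hα : ∀ k, ‖α k‖ < 1) {z : ℂ} (hz : ‖z‖ < 1) (k : ℕ) :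
    ‖z * (szego α k).eval z‖ < ‖(szegoRev α k).eval z‖ := by
  induction k with
  | zero => simpa [szego, szegoRev] using hz
  | succ k ih =>
    rw [eval_szego_succ, eval_szegoRev_succ, norm_mul]
    calc ‖z‖ * ‖z * (szego α k).eval z - conj (α k) * (szegoRev α k).eval z‖
        ≤ ‖z * (szego α k).eval z - conj (α k) * (szegoRev α k).eval z‖ :=
          mul_le_of_le_one_left (norm_nonneg _) hz.le
      _ < _ := norm_sub_conj_mul_lt_norm_sub_mul (hα k) ih

theorem norm_eval_szegoRev_lt_of_one_lt_norm (hα : ∀ k, ‖α k‖ < 1) {z : ℂ} (hz : 1 < ‖z‖) (k : ℕ) :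
    ‖(szegoRev α k).eval z‖ < ‖z * (szego α k).eval z‖ := by
  induction k with
  | zero => simpa [szego, szegoRev] using hz
  | succ k ih =>
    rw [eval_szego_succ, eval_szegoRev_succ, norm_mul]
    have key := norm_sub_conj_mul_lt_norm_sub_mul (a := conj (α k)) (by simpa using hα k) ih
    rw [conj_conj] at key
    exact key.trans_le (le_mul_of_one_le_left (norm_nonneg _) hz.le)

theorem norm_eq_one_of_isRoot_popuc (hα : ∀ k, ‖α k‖ < 1) {B : ℂ} (hB : ‖B‖ = 1) {k : ℕ}
    {z : ℂ} (h : (popuc α B k).IsRoot z) : ‖z‖ = 1 := by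
  have hnorm : ‖z * (szego α k).eval z‖ = ‖(szegoRev α k).eval z‖ := by
    rw [IsRoot, eval_popuc, sub_eq_zero] at h
    rw [h, norm_mul, norm_conj, hB, one_mul]
  rcases lt_trichotomy ‖z‖ 1 with hz | hz | hz
  · exact absurd hnorm (norm_mul_eval_szego_lt_of_norm_lt_one hα hz k).ne
  · exact hz
  · exact absurd hnorm (norm_eval_szegoRev_lt_of_one_lt_norm hα hz k).ne'

end Szego

theorem periodic_exp_ofReal_mul_I :
    Function.Periodic (fun x : ℝ => exp (x * I)) (2 * Real.pi) := by
  intro x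
  push_cast
  exact exp_mul_I_periodic (x : ℂ)

theorem re_one_sub_pos {w : ℂ} (hw : ‖w‖ < 1) : 0 < (1 - w).re := by
  rw [sub_re, one_re, sub_pos]
  exact (re_le_norm w).trans_lt hw

theorem norm_mul_exp_ofReal_mul_I (a : ℂ) (x : ℝ) : ‖a * exp (x * I)‖ = ‖a‖ := by
  rw [norm_mul, norm_exp_ofReal_mul_I, mul_one]

theorem exp_neg_two_arg_mul_I_mul_self (c : ℂ) : exp (-(2 * arg c : ℝ) * I) * c = conj c := by
  obtain ⟨r, φ, hc, hφ⟩ : ∃ r φ : ℝ, c = r * exp (φ * I) ∧ arg c = φ :=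
    ⟨‖c‖, arg c, (norm_mul_exp_arg_mul_I c).symm, rfl⟩
  rw [hφ, hc, map_mul, conj_ofReal, ← exp_conj, mul_left_comm, ← exp_add]
  congr 2
  simp only [map_mul, conj_ofReal, conj_I]
  push_cast
  ring

section MobiusLift

/-- A continuous lift to `ℝ` of the Blaschke factor `ζ ↦ (ζ - conj a) / (1 - a ζ)` of the
circle. -/
noncomputable def mobiusLift (a : ℂ) (x : ℝ) : ℝ :=
  x - 2 * arg (1 - a * exp (x * I))

theorem exp_mobiusLift_mul_I_mul (a : ℂ) (x : ℝ) :
    exp (mobiusLift a x * I) * (1 - a * exp (x * I)) = exp (x * I) - conj a := by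
  have hsplit : exp (mobiusLift a x * I) =
      exp (x * I) * exp (-(2 * arg (1 - a * exp (x * I)) : ℝ) * I) := by
    rw [← exp_add, mobiusLift]
    push_cast
    ring_nf
  rw [hsplit, mul_assoc, exp_neg_two_arg_mul_I_mul_self, map_sub, map_one, map_mul, ← exp_conj,
    map_mul, conj_ofReal, conj_I, mul_sub, mul_one, mul_left_comm, ← exp_add, ← mul_add,
    add_neg_cancel, mul_zero, exp_zero, mul_one]

theorem mobiusLift_add_two_pi (a : ℂ) (x : ℝ) :
    mobiusLift a (x + 2 * Real.pi) = mobiusLift a x + 2 * Real.pi := by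
  have hexp : exp (↑(x + 2 * Real.pi) * I) = exp (x * I) := periodic_exp_ofReal_mul_I x
  rw [mobiusLift, mobiusLift, hexp]
  ring

variable {a : ℂ}

theorem continuous_mobiusLift (ha : ‖a‖ < 1) : Continuous (mobiusLift a) := by
  have hc : Continuous fun x : ℝ => 1 - a * exp (x * I) := by fun_prop
  refine continuous_id.sub (continuous_const.mul ?_)
  refine continuous_iff_continuousAt.2 fun x => (continuousAt_arg ?_).comp hc.continuousAt
  exact mem_slitPlane_iff.2 (Or.inl (re_one_sub_pos (by rwa [norm_mul_exp_ofReal_mul_I])))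

theorem mobiusLift_injective (ha : ‖a‖ < 1) : Function.Injective (mobiusLift a) := by
  -- The Blaschke factor is injective, and `mobiusLift a x - x` depends only on `e^{ix}`.
  intro x y hxy
  set u := exp (mobiusLift a y * I)
  have hx := exp_mobiusLift_mul_I_mul a x
  have hy := exp_mobiusLift_mul_I_mul a y
  rw [hxy] at hx
  have hu : 1 + u * a ≠ 0 := by
    intro h
    have : ‖u * a‖ = 1 := by rw [eq_neg_of_add_eq_zero_right h, norm_neg, norm_one]
    rw [mul_comm, norm_mul_exp_ofReal_mul_I] at this
    exact ha.ne this
  have hexp : exp (x * I) = exp (y * I) := by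
    have : (exp (x * I) - exp (y * I)) * (1 + u * a) = 0 := by linear_combination hy - hx
    simpa [sub_eq_zero, hu] using this
  have := congrArg (fun t => t - x) hxy
  simp only [mobiusLift, hexp] at this
  linarith

theorem mobiusLift_strictMono (ha : ‖a‖ < 1) : StrictMono (mobiusLift a) := by
  refine ((continuous_mobiusLift ha).strictMono_of_inj (mobiusLift_injective ha)).resolve_right ?_
  intro hanti
  have := hanti (lt_add_of_pos_right 0 Real.two_pi_pos)
  rw [mobiusLift_add_two_pi] at this
  linarith [Real.two_pi_pos]

end MobiusLift

/-- A continuous lift of the argument of `ζ Φ_k(ζ) / Φ_k^*(ζ)` at `ζ = e^{iθ}`. -/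
noncomputable def szegoPhase (α : ℕ → ℂ) : ℕ → ℝ → ℝ
  | 0 => id
  | k + 1 => fun θ => θ + mobiusLift (α k) (szegoPhase α k θ)

section Phase

variable {α : ℕ → ℂ}

theorem szegoPhase_spec (hα : ∀ k, ‖α k‖ < 1) (k : ℕ) (θ : ℝ) :
    (szegoRev α k).eval (exp (θ * I)) ≠ 0 ∧
      exp (θ * I) * (szego α k).eval (exp (θ * I)) =
        exp (szegoPhase α k θ * I) * (szegoRev α k).eval (exp (θ * I)) := by
  induction k with
  | zero => simp [szego, szegoRev, szegoPhase]
  | succ k ih =>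
    obtain ⟨hS, hE⟩ := ih
    set z := exp (θ * I)
    set S := (szegoRev α k).eval z
    set E := exp (szegoPhase α k θ * I)
    have hSsucc : (szegoRev α (k + 1)).eval z = S * (1 - α k * E) := by
      rw [eval_szegoRev_succ, hE]
      ring
    have hE1 : 1 - α k * E ≠ 0 := by
      intro h
      have := re_one_sub_pos (by rw [norm_mul_exp_ofReal_mul_I]; exact hα k : ‖α k * E‖ < 1)
      rw [h, zero_re] at this
      exact this.false
    refine ⟨hSsucc ▸ mul_ne_zero hS hE1, ?_⟩
    have hphase : exp (szegoPhase α (k + 1) θ * I) =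
        z * exp (mobiusLift (α k) (szegoPhase α k θ) * I) := by
      rw [← exp_add, szegoPhase]
      push_cast
      ring_nf
    rw [hSsucc, eval_szego_succ, hE, hphase]
    linear_combination -(z * S) * exp_mobiusLift_mul_I_mul (α k) (szegoPhase α k θ)

theorem continuous_szegoPhase (hα : ∀ k, ‖α k‖ < 1) (k : ℕ) : Continuous (szegoPhase α k) := by
  induction k with
  | zero => exact continuous_id
  | succ k ih => exact continuous_id.add ((continuous_mobiusLift (hα k)).comp ih)

theorem szegoPhase_strictMono (hα : ∀ k, ‖α k‖ < 1) (k : ℕ) : StrictMono (szegoPhase α k) := by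
  induction k with
  | zero => exact strictMono_id
  | succ k ih => exact strictMono_id.add ((mobiusLift_strictMono (hα k)).comp ih)

theorem isRoot_popuc_exp_iff (hα : ∀ k, ‖α k‖ < 1) (B : ℂ) (k : ℕ) (θ : ℝ) :
    (popuc α B k).IsRoot (exp (θ * I)) ↔ exp (szegoPhase α k θ * I) = conj B := by
  obtain ⟨hS, hE⟩ := szegoPhase_spec hα k θ
  rw [IsRoot, eval_popuc, hE, ← sub_mul, mul_eq_zero, sub_eq_zero, or_iff_left hS]

theorem szegoPhase_succ_add_two_pi_lt (hα : ∀ k, ‖α k‖ < 1) {k : ℕ} {θ₀ θ₁ : ℝ} (hθ : θ₀ < θ₁)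
    (h : szegoPhase α k θ₀ + 2 * Real.pi ≤ szegoPhase α k θ₁) :
    szegoPhase α (k + 1) θ₀ + 2 * Real.pi < szegoPhase α (k + 1) θ₁ := by
  have := (mobiusLift_strictMono (hα k)).monotone h
  rw [mobiusLift_add_two_pi] at this
  simp only [szegoPhase]
  linarith

theorem szegoPhase_add_two_pi_lt (hα : ∀ k, ‖α k‖ < 1) {k l : ℕ} (hkl : k < l) {θ₀ θ₁ : ℝ}
    (hθ : θ₀ < θ₁) (h : szegoPhase α k θ₀ + 2 * Real.pi ≤ szegoPhase α k θ₁) :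
    szegoPhase α l θ₀ + 2 * Real.pi < szegoPhase α l θ₁ := by
  induction l, hkl using Nat.le_induction with
  | base => exact szegoPhase_succ_add_two_pi_lt hα hθ h
  | succ l _ ih => exact szegoPhase_succ_add_two_pi_lt hα hθ ih.le

end Phase

section Circle

theorem exists_mem_Ioc_exp_mul_I_eq {u : ℂ} (hu : ‖u‖ = 1) (a : ℝ) :
    ∃ g ∈ Set.Ioc a (a + 2 * Real.pi), exp (g * I) = u := by
  refine ⟨toIocMod Real.two_pi_pos a (arg u), toIocMod_mem_Ioc _ _ _, ?_⟩
  calc exp (toIocMod Real.two_pi_pos a (arg u) * I) = exp (arg u * I) :=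
        periodic_exp_ofReal_mul_I.sub_zsmul_eq _
    _ = u := by simpa [hu] using norm_mul_exp_arg_mul_I u

theorem add_two_pi_le_of_exp_mul_I_eq {x y : ℝ} (h : exp (x * I) = exp (y * I)) (hxy : x < y) :
    x + 2 * Real.pi ≤ y := by
  obtain ⟨m, hm⟩ := Circle.exp_eq_exp.1 (Subtype.ext h.symm : Circle.exp y = Circle.exp x)
  have hm_pos : (0 : ℤ) < m := by
    exact_mod_cast (pos_of_mul_pos_left (by linarith) Real.two_pi_pos.le : (0 : ℝ) < m)
  have hm1 : (1 : ℝ) ≤ m := by exact_mod_cast hm_pos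
  nlinarith [Real.two_pi_pos]

theorem exists_lt_lt_add_two_pi_exp_mul_I_eq {z₀ z₁ : ℂ} (h₀ : ‖z₀‖ = 1) (h₁ : ‖z₁‖ = 1)
    (hne : z₀ ≠ z₁) :
    ∃ θ₀ θ₁ : ℝ, θ₀ < θ₁ ∧ θ₁ < θ₀ + 2 * Real.pi ∧ exp (θ₀ * I) = z₀ ∧ exp (θ₁ * I) = z₁ := by
  obtain ⟨θ₀, -, rfl⟩ := exists_mem_Ioc_exp_mul_I_eq h₀ 0
  obtain ⟨θ₁, ⟨hlt, hle⟩, rfl⟩ := exists_mem_Ioc_exp_mul_I_eq h₁ θ₀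
  refine ⟨θ₀, θ₁, hlt, hle.lt_of_ne fun heq => hne ?_, rfl, rfl⟩
  rw [heq]
  exact (periodic_exp_ofReal_mul_I θ₀).symm

theorem exp_mul_I_mem_oArc {θ₀ θ θ₁ : ℝ} (h₀ : θ₀ < θ) (h₁ : θ < θ₁)
    (h₂ : θ₁ < θ₀ + 2 * Real.pi) :
    exp (θ * I) ∈ oArc (exp (θ₀ * I)) (exp (θ₁ * I)) := by
  refine ⟨θ₁ - θ₀, θ - θ₀, by linarith, by linarith, by linarith, ?_, ?_⟩ <;>
  · rw [← exp_add]
    push_cast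
    ring_nf

end Circle

/-- **Theorem 3.4**. For `m > n`, strictly between any pair of distinct zeros of
`Φ̃_n = Φ_n(·;β_n)` there is a zero of `Φ̃_m = Φ_m(·;β_m)`. -/
theorem popuc_zero_between_zeros
    (α : ℕ → ℂ) (hα : ∀ k, ‖α k‖ < 1)
    (β : ℕ → ℂ) (hβ : ∀ k, 1 ≤ k → ‖β k‖ = 1)
    (m n : ℕ) (hn : 1 ≤ n) (hmn : n < m)
    (z0 z1 : ℂ) (hne : z0 ≠ z1)
    (h0 : (popuc α (β n) (n - 1)).IsRoot z0)
    (h1 : (popuc α (β n) (n - 1)).IsRoot z1) :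
    ∃ z ∈ oArc z0 z1, (popuc α (β m) (m - 1)).IsRoot z := by
  obtain ⟨θ₀, θ₁, hθ, hwidth, rfl, rfl⟩ := exists_lt_lt_add_two_pi_exp_mul_I_eq
    (norm_eq_one_of_isRoot_popuc hα (hβ n hn) h0) (norm_eq_one_of_isRoot_popuc hα (hβ n hn) h1)
    hne
  rw [isRoot_popuc_exp_iff hα] at h0 h1
  have hgap := szegoPhase_add_two_pi_lt hα (by omega : n - 1 < m - 1) hθ
    (add_two_pi_le_of_exp_mul_I_eq (h0.trans h1.symm) (szegoPhase_strictMono hα _ hθ))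
  obtain ⟨g, ⟨hg₀, hg₁⟩, hg⟩ := exists_mem_Ioc_exp_mul_I_eq
    (by rw [norm_conj, hβ m (by omega)]) (szegoPhase α (m - 1) θ₀)
  obtain ⟨θ, ⟨hθ₀, hθ₁⟩, rfl⟩ := intermediate_value_Ioo hθ.le
    (continuous_szegoPhase hα (m - 1)).continuousOn ⟨hg₀, hg₁.trans_lt hgap⟩
  exact ⟨exp (θ * I), exp_mul_I_mem_oArc hθ₀ hθ₁ hwidth,
    (isRoot_popuc_exp_iff hα _ _ _).2 hg⟩
end
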